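/- arXiv:1710.09917 — 7 statements merged into one kernel-verified Lean document; each statement's English description precedes it below -/
import Mathlib

section
/- If u ∈ C¹([a,b]; ℝ), then for every c ∈ [a,b] one has u(c)² ≤ (2/(b−a)) · ∫ₐᵇ u(x)² dx + (b−a) · ∫ₐᵇ u'(x)² dx. -/
open Real MeasureTheory intervalIntegral Set

theorem pointwise_sobolev_bound
    (a b : ℝ) (hab : a < b) (u u' : ℝ → ℝ)
    (hu : ∀ x ∈ Set.Icc a b, HasDerivWithinAt u (u' x) (Set.Icc a b) x)
    (hu' : ContinuousOn u' (Set.Icc a b)) :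
    ∀ c ∈ Set.Icc a b,
      (u c) ^ 2 ≤ 2 / (b - a) * (∫ x in a..b, (u x) ^ 2)
        + (b - a) * ∫ x in a..b, (u' x) ^ 2 := by
  intro c hc
  have hba : 0 < b - a := sub_pos.2 hab
  have hucont : ContinuousOn u (Set.Icc a b) := fun x hx => (hu x hx).continuousWithinAt
  have hIcc : Set.uIcc a b = Set.Icc a b := Set.uIcc_of_le hab.le
  set g : ℝ → ℝ := fun x => |2 * u x * u' x| with hg
  have hgcont0 : ContinuousOn (fun x => 2 * u x * u' x) (Set.Icc a b) :=
    (continuousOn_const.mul hucont).mul hu'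
  have hgcont : ContinuousOn g (Set.Icc a b) := hgcont0.abs
  have hgint : IntervalIntegrable g volume a b := (hIcc ▸ hgcont).intervalIntegrable
  have hu2cont : ContinuousOn (fun x => u x ^ 2) (Set.Icc a b) := hucont.pow 2
  have hu2int : IntervalIntegrable (fun x => u x ^ 2) volume a b :=
    (hIcc ▸ hu2cont).intervalIntegrable
  have hu'2int : IntervalIntegrable (fun x => u' x ^ 2) volume a b :=
    (hIcc ▸ (hu'.pow 2)).intervalIntegrable
  obtain ⟨y, hy, hymin⟩ := isCompact_Icc.exists_isMinOn (Set.nonempty_Icc.2 hab.le) hu2cont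
  have step1 : (b - a) * u y ^ 2 ≤ ∫ x in a..b, u x ^ 2 := by
    have := intervalIntegral.integral_mono_on hab.le intervalIntegrable_const hu2int
      (fun x hx => hymin hx)
    simpa using this
  -- FTC step
  have ftc : ∀ p q, p ∈ Set.Icc a b → q ∈ Set.Icc a b → p ≤ q →
      |u q ^ 2 - u p ^ 2| ≤ ∫ x in a..b, g x := by
    intro p q hp hq hpq
    have hsub : Set.Icc p q ⊆ Set.Icc a b := Set.Icc_subset_Icc hp.1 hq.2
    have hintpq : IntervalIntegrable (fun x => 2 * u x * u' x) volume p q :=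
      (Set.uIcc_of_le hpq ▸ (hgcont0.mono hsub)).intervalIntegrable
    have heq : ∫ x in p..q, 2 * u x * u' x = u q ^ 2 - u p ^ 2 := by
      apply intervalIntegral.integral_eq_sub_of_hasDeriv_right_of_le hpq
        (hu2cont.mono hsub) _ hintpq
      intro x hx
      have hxab : x ∈ Set.Ioo a b := ⟨hp.1.trans_lt hx.1, hx.2.trans_le hq.2⟩
      have hd : HasDerivAt u (u' x) x :=
        (hu x (Set.Ioo_subset_Icc_self hxab)).hasDerivAt (Icc_mem_nhds hxab.1 hxab.2)
      have hd2 : HasDerivAt (fun x => u x ^ 2) (2 * u x * u' x) x := by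
        have := hd.fun_pow 2
        simpa [mul_comm, mul_assoc, mul_left_comm] using this
      exact hd2.hasDerivWithinAt
    calc |u q ^ 2 - u p ^ 2| = |∫ x in p..q, 2 * u x * u' x| := by rw [heq]
      _ ≤ ∫ x in p..q, g x := by
          exact intervalIntegral.abs_integral_le_integral_abs hpq (f := fun x => 2 * u x * u' x)
      _ ≤ ∫ x in a..b, g x := by
          apply intervalIntegral.integral_mono_interval hp.1 hpq hq.2 _ hgint
          exact Filter.Eventually.of_forall fun x => abs_nonneg _
  have key : u c ^ 2 ≤ u y ^ 2 + ∫ x in a..b, g x := by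
    rcases le_total y c with h | h
    · have := ftc y c hy hc h
      have h2 := le_abs_self (u c ^ 2 - u y ^ 2)
      linarith
    · have := ftc c y hc hy h
      have h2 := neg_abs_le (u y ^ 2 - u c ^ 2)
      linarith
  -- pointwise AM-GM bound and integration
  have step3 : (∫ x in a..b, g x)
      ≤ (b - a)⁻¹ * (∫ x in a..b, u x ^ 2) + (b - a) * ∫ x in a..b, u' x ^ 2 := by
    have hptw : ∀ x ∈ Set.Icc a b, g x ≤ (b - a)⁻¹ * u x ^ 2 + (b - a) * u' x ^ 2 := by
      intro x _
      have h1 : |2 * u x * u' x| * (b - a) ≤ u x ^ 2 + (b - a) ^ 2 * u' x ^ 2 := by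
        rcases abs_cases (2 * u x * u' x) with ⟨h, _⟩ | ⟨h, _⟩ <;> rw [h] <;>
          nlinarith [sq_nonneg (u x - (b - a) * u' x), sq_nonneg (u x + (b - a) * u' x)]
      have h2 : |2 * u x * u' x| ≤ (u x ^ 2 + (b - a) ^ 2 * u' x ^ 2) / (b - a) :=
        (le_div_iff₀ hba).2 h1
      have h3 : (u x ^ 2 + (b - a) ^ 2 * u' x ^ 2) / (b - a)
          = (b - a)⁻¹ * u x ^ 2 + (b - a) * u' x ^ 2 := by
        field_simp
      simpa [hg, h3] using h2
    have hrhs : IntervalIntegrable (fun x => (b - a)⁻¹ * u x ^ 2 + (b - a) * u' x ^ 2) volume a b :=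
      (hu2int.const_mul _).add (hu'2int.const_mul _)
    have := intervalIntegral.integral_mono_on hab.le hgint hrhs
      (fun x hx => hptw x hx)
    calc (∫ x in a..b, g x)
        ≤ ∫ x in a..b, ((b - a)⁻¹ * u x ^ 2 + (b - a) * u' x ^ 2) := this
      _ = (b - a)⁻¹ * (∫ x in a..b, u x ^ 2) + (b - a) * ∫ x in a..b, u' x ^ 2 := by
          rw [intervalIntegral.integral_add (hu2int.const_mul _) (hu'2int.const_mul _),
            intervalIntegral.integral_const_mul, intervalIntegral.integral_const_mul]
  have hy2 : u y ^ 2 ≤ (b - a)⁻¹ * ∫ x in a..b, u x ^ 2 := by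
    rw [← inv_mul_cancel_left₀ hba.ne' (u y ^ 2)]
    exact mul_le_mul_of_nonneg_left step1 (inv_nonneg.2 hba.le)
  have hdiv : 2 / (b - a) * (∫ x in a..b, u x ^ 2)
      = (b - a)⁻¹ * (∫ x in a..b, u x ^ 2) + (b - a)⁻¹ * (∫ x in a..b, u x ^ 2) := by
    field_simp; ring
  rw [hdiv]
  linarith
end

section
/- If u ∈ C¹([a,b]; ℝ), then for every p ≥ 1 one has (∫ₐᵇ |u(x)|^p dx)^{1/p} ≤ (b−a)^{1/p} · ( (2/(b−a)) · ∫ₐᵇ u(x)² dx + (b−a) · ∫ₐᵇ u'(x)² dx )^{1/2}. -/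
open Real MeasureTheory intervalIntegral Set

theorem Lp_sobolev_bound
    (a b : ℝ) (hab : a < b) (u u' : ℝ → ℝ)
    (hu : ∀ x ∈ Set.Icc a b, HasDerivWithinAt u (u' x) (Set.Icc a b) x)
    (hu' : ContinuousOn u' (Set.Icc a b)) :
    ∀ p : ℝ, 1 ≤ p →
      (∫ x in a..b, |u x| ^ p) ^ (1 / p) ≤ (b - a) ^ (1 / p) *
        Real.sqrt (2 / (b - a) * (∫ x in a..b, (u x) ^ 2)
          + (b - a) * ∫ x in a..b, (u' x) ^ 2) := by
  intro p hp
  have hp0 : (0:ℝ) < p := lt_of_lt_of_le one_pos hp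
  have hc : (0:ℝ) < b - a := sub_pos.2 hab
  have hcu : ContinuousOn u (Icc a b) := fun x hx => (hu x hx).continuousWithinAt
  set M2 : ℝ := 2 / (b - a) * (∫ x in a..b, (u x) ^ 2)
          + (b - a) * ∫ x in a..b, (u' x) ^ 2 with hM2def
  -- derivative at interior points
  have hderivAt : ∀ t ∈ Ioo a b, HasDerivAt u (u' t) t := by
    intro t ht
    exact (hu t (Ioo_subset_Icc_self ht)).hasDerivAt (Icc_mem_nhds ht.1 ht.2)
  -- FTC for u^2 on subintervals
  have ftc : ∀ x ∈ Icc a b, ∀ y ∈ Icc a b,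
      (∫ t in y..x, 2 * u t * u' t) = u x ^ 2 - u y ^ 2 := by
    intro x hx y hy
    have hsub : uIcc y x ⊆ Icc a b := uIcc_subset_Icc hy hx
    have hcont : ContinuousOn (fun t => u t ^ 2) (uIcc y x) :=
      ((hcu.mono hsub).pow 2)
    have hint : IntervalIntegrable (fun t => 2 * u t * u' t) volume y x := by
      apply ContinuousOn.intervalIntegrable
      exact ((continuousOn_const.mul (hcu.mono hsub)).mul (hu'.mono hsub))
    refine intervalIntegral.integral_eq_sub_of_hasDeriv_right hcont ?_ hint
    intro t ht
    have ht' : t ∈ Ioo a b := by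
      constructor
      · exact lt_of_le_of_lt (le_min hy.1 hx.1) ht.1
      · exact lt_of_lt_of_le ht.2 (max_le hy.2 hx.2)
    have : HasDerivAt (fun t => u t ^ 2) (2 * u t * u' t) t := by
      have h := (hderivAt t ht').pow 2
      exact h.congr_deriv (by ring)
    exact this.hasDerivWithinAt
  -- pointwise AM-GM bound on the integrand
  have amgm : ∀ t ∈ Icc a b,
      |2 * u t * u' t| ≤ u t ^ 2 / (b - a) + (b - a) * u' t ^ 2 := by
    intro t _
    have h1 : |2 * u t * u' t| = 2 * |u t| * |u' t| := by
      rw [abs_mul, abs_mul, abs_two]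
    have heq : u t ^ 2 / (b - a) + (b - a) * u' t ^ 2
        = (u t ^ 2 + (b - a) ^ 2 * u' t ^ 2) / (b - a) := by
      field_simp
    rw [h1, heq, le_div_iff₀ hc]
    nlinarith [sq_nonneg (|u t| - (b - a) * |u' t|), sq_abs (u t), sq_abs (u' t),
      abs_nonneg (u t), abs_nonneg (u' t)]
  -- integrability facts on [a,b]
  have hint2 : IntervalIntegrable (fun t => 2 * u t * u' t) volume a b :=
    ContinuousOn.intervalIntegrable (by
      rw [uIcc_of_le hab.le]; exact (continuousOn_const.mul hcu).mul hu')
  have hintabs : IntervalIntegrable (fun t => |2 * u t * u' t|) volume a b := hint2.abs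
  have hintu2 : IntervalIntegrable (fun t => u t ^ 2) volume a b :=
    ContinuousOn.intervalIntegrable (by rw [uIcc_of_le hab.le]; exact hcu.pow 2)
  have hintu'2 : IntervalIntegrable (fun t => u' t ^ 2) volume a b :=
    ContinuousOn.intervalIntegrable (by rw [uIcc_of_le hab.le]; exact hu'.pow 2)
  -- bound on C
  set C : ℝ := ∫ t in a..b, |2 * u t * u' t| with hCdef
  have hCbound : C ≤ (∫ t in a..b, u t ^ 2) / (b - a) + (b - a) * ∫ t in a..b, u' t ^ 2 := by
    have h1 : C ≤ ∫ t in a..b, (u t ^ 2 / (b - a) + (b - a) * u' t ^ 2) := by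
      apply intervalIntegral.integral_mono_on hab.le hintabs
      · exact (hintu2.div_const _).add (hintu'2.const_mul _)
      · exact amgm
    have h2 : (∫ t in a..b, (u t ^ 2 / (b - a) + (b - a) * u' t ^ 2))
        = (∫ t in a..b, u t ^ 2) / (b - a) + (b - a) * ∫ t in a..b, u' t ^ 2 := by
      rw [intervalIntegral.integral_add (hintu2.div_const _) (hintu'2.const_mul _),
        intervalIntegral.integral_div, intervalIntegral.integral_const_mul]
    linarith
  -- pointwise bound on u^2
  have key : ∀ x ∈ Icc a b, u x ^ 2 ≤ M2 := by
    intro x hx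
    have hyb : ∀ y ∈ Icc a b, u x ^ 2 ≤ u y ^ 2 + C := by
      intro y hy
      have h1 : u x ^ 2 - u y ^ 2 = ∫ t in y..x, 2 * u t * u' t := (ftc x hx y hy).symm
      have h2 : |∫ t in y..x, 2 * u t * u' t| ≤ C := by
        have hmono' : ∀ c d : ℝ, a ≤ c → c ≤ d → d ≤ b →
            (∫ t in c..d, |2 * u t * u' t|) ≤ C := by
          intro c d h1 h2 h3
          exact intervalIntegral.integral_mono_interval h1 h2 h3
            (Filter.Eventually.of_forall fun t => abs_nonneg _) hintabs
        rcases le_total y x with h | h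
        · calc |∫ t in y..x, 2 * u t * u' t|
              ≤ ∫ t in y..x, |2 * u t * u' t| :=
                intervalIntegral.abs_integral_le_integral_abs h
            _ ≤ C := hmono' y x hy.1 h hx.2
        · rw [intervalIntegral.integral_symm, abs_neg]
          calc |∫ t in x..y, 2 * u t * u' t|
              ≤ ∫ t in x..y, |2 * u t * u' t| :=
                intervalIntegral.abs_integral_le_integral_abs h
            _ ≤ C := hmono' x y hx.1 h hy.2
      have h3 := (le_abs_self (∫ t in y..x, 2 * u t * u' t)).trans h2
      linarith
    -- integrate the bound over y
    have h3 : (b - a) * u x ^ 2 ≤ (∫ y in a..b, u y ^ 2) + (b - a) * C := by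
      have hmono := intervalIntegral.integral_mono_on hab.le
        (_root_.intervalIntegrable_const (c := u x ^ 2))
        (hintu2.add (_root_.intervalIntegrable_const (c := C))) hyb
      rw [intervalIntegral.integral_const, smul_eq_mul,
        intervalIntegral.integral_add hintu2 (_root_.intervalIntegrable_const (c := C)),
        intervalIntegral.integral_const, smul_eq_mul] at hmono
      linarith
    have h4 : (b - a) * M2 = 2 * (∫ y in a..b, u y ^ 2) + (b - a) ^ 2 * ∫ t in a..b, u' t ^ 2 := by
      rw [hM2def]; field_simp
    have h5 : (b - a) * C ≤ (∫ t in a..b, u t ^ 2) + (b - a) ^ 2 * ∫ t in a..b, u' t ^ 2 := by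
      have h6 := mul_le_mul_of_nonneg_left hCbound hc.le
      calc (b - a) * C
          ≤ (b - a) * ((∫ t in a..b, u t ^ 2) / (b - a) + (b - a) * ∫ t in a..b, u' t ^ 2) := h6
        _ = (∫ t in a..b, u t ^ 2) + (b - a) ^ 2 * ∫ t in a..b, u' t ^ 2 := by
            field_simp
    rw [← mul_le_mul_iff_right₀ hc, h4]
    linarith
  -- now conclude
  have hM2 : 0 ≤ M2 := le_trans (sq_nonneg _) (key a ⟨le_refl a, hab.le⟩)
  set s : ℝ := Real.sqrt M2 with hsdef
  have hs : 0 ≤ s := Real.sqrt_nonneg _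
  have habs : ∀ x ∈ Icc a b, |u x| ≤ s := by
    intro x hx
    rw [hsdef, show |u x| = Real.sqrt (u x ^ 2) from (Real.sqrt_sq_eq_abs _).symm]
    exact Real.sqrt_le_sqrt (key x hx)
  have hintp : IntervalIntegrable (fun x => |u x| ^ p) volume a b := by
    apply ContinuousOn.intervalIntegrable
    apply ContinuousOn.rpow_const
    · simpa [uIcc_of_le hab.le] using hcu.abs
    · intro x _; exact Or.inr (le_trans zero_le_one hp)
  have hmono : (∫ x in a..b, |u x| ^ p) ≤ (b - a) * s ^ p := by
    have h1 : (∫ x in a..b, |u x| ^ p) ≤ ∫ _x in a..b, s ^ p := by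
      apply intervalIntegral.integral_mono_on hab.le hintp intervalIntegrable_const
      intro x hx
      exact Real.rpow_le_rpow (abs_nonneg _) (habs x hx) hp0.le
    simpa [smul_eq_mul] using h1
  have hnn : 0 ≤ ∫ x in a..b, |u x| ^ p := by
    apply intervalIntegral.integral_nonneg hab.le
    intro x _; exact Real.rpow_nonneg (abs_nonneg _) _
  calc (∫ x in a..b, |u x| ^ p) ^ (1 / p)
      ≤ ((b - a) * s ^ p) ^ (1 / p) :=
        Real.rpow_le_rpow hnn hmono (by positivity)
    _ = (b - a) ^ (1 / p) * s := by
        rw [Real.mul_rpow hc.le (Real.rpow_nonneg hs _), ← Real.rpow_mul hs,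
          mul_one_div_cancel hp0.ne', Real.rpow_one]
end

section
/- Let μ > 0 and ñ ≥ 0 be constants, let f̃ : [0,1] × [0,∞) → ℝ be continuous and d̃ : [0,∞) → ℝ be continuous with d̃(0) = 0, and let ṽ : [0,1] × [0,∞) → ℝ be a classical solution of ṽ_t − μ ṽ_xx + ñ ṽ = f̃(x,t) on (0,1) × (0,∞) with boundary conditions ṽ(0,t) = 0, ṽ(1,t) = d̃(t) for all t ≥ 0 and zero initial condition ṽ(x,0) = 0. Then for every t > 0 and every p > 2, max over (x,s) ∈ [0,1] × [0,t] of |ṽ(x,s)| is at most max_{s∈[0,t]} |d̃(s)| + (1/μ) · 2^{(5p−8)/(2p−4)} · max_{(x,s)∈[0,1]×[0,t]} |f̃(x,s)|. -/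
open Real MeasureTheory intervalIntegral Set


open Filter Topology in
lemma parabolic_max_principle (μ n T : ℝ) (hμ : 0 < μ) (hn : 0 ≤ n) (hT : 0 < T)
    (u ut ux uxx : ℝ → ℝ → ℝ)
    (hcont : ContinuousOn (fun p : ℝ × ℝ => u p.1 p.2) (Set.Icc 0 1 ×ˢ Set.Icc 0 T))
    (hut : ∀ x ∈ Set.Ioo (0:ℝ) 1, ∀ s ∈ Set.Ioc (0:ℝ) T, HasDerivAt (fun τ => u x τ) (ut x s) s)
    (hux : ∀ x ∈ Set.Ioo (0:ℝ) 1, ∀ s ∈ Set.Ioc (0:ℝ) T, HasDerivAt (fun y => u y s) (ux x s) x)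
    (huxx : ∀ x ∈ Set.Ioo (0:ℝ) 1, ∀ s ∈ Set.Ioc (0:ℝ) T, HasDerivAt (fun y => ux y s) (uxx x s) x)
    (hineq : ∀ x ∈ Set.Ioo (0:ℝ) 1, ∀ s ∈ Set.Ioc (0:ℝ) T, ut x s - μ * uxx x s + n * u x s < 0)
    (hb0 : ∀ s ∈ Set.Icc (0:ℝ) T, u 0 s ≤ 0)
    (hb1 : ∀ s ∈ Set.Icc (0:ℝ) T, u 1 s ≤ 0)
    (hb2 : ∀ x ∈ Set.Icc (0:ℝ) 1, u x 0 ≤ 0) :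
    ∀ x ∈ Set.Icc (0:ℝ) 1, ∀ s ∈ Set.Icc (0:ℝ) T, u x s ≤ 0 := by
  set K := Set.Icc (0:ℝ) 1 ×ˢ Set.Icc (0:ℝ) T with hK
  have hKc : IsCompact K := isCompact_Icc.prod isCompact_Icc
  have hKne : K.Nonempty := ⟨(0, 0), ⟨⟨le_refl 0, zero_le_one⟩, ⟨le_refl 0, hT.le⟩⟩⟩
  obtain ⟨z, hzK, hzmax⟩ := hKc.exists_isMaxOn hKne hcont
  rw [isMaxOn_iff] at hzmax
  obtain ⟨x0, s0⟩ := z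
  simp only [hK, Set.mem_prod] at hzK
  obtain ⟨hx0K, hs0K⟩ := hzK
  suffices hmax : u x0 s0 ≤ 0 by
    intro x hx s hs
    exact le_trans (hzmax (x, s) ⟨hx, hs⟩) hmax
  by_contra hpos
  push_neg at hpos
  -- the max point is interior (in x) and at positive time
  have hx0 : x0 ∈ Set.Ioo (0:ℝ) 1 := by
    rcases eq_or_lt_of_le hx0K.1 with h | h
    · exact absurd hpos (not_lt.mpr (h ▸ hb0 s0 hs0K))
    rcases eq_or_lt_of_le hx0K.2 with h2 | h2
    · exact absurd hpos (not_lt.mpr (h2 ▸ hb1 s0 hs0K))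
    exact ⟨h, h2⟩
  have hs0 : s0 ∈ Set.Ioc (0:ℝ) T := by
    rcases eq_or_lt_of_le hs0K.1 with h | h
    · exact absurd hpos (not_lt.mpr (h ▸ hb2 x0 hx0K))
    exact ⟨h, hs0K.2⟩
  -- time derivative nonneg
  have hA : 0 ≤ ut x0 s0 := by
    have hdA := hut x0 hx0 s0 hs0
    have htend : Tendsto (slope (fun τ => u x0 τ) s0) (𝓝[<] s0) (𝓝 (ut x0 s0)) :=
      (hasDerivAt_iff_tendsto_slope.mp hdA).mono_left
        (nhdsWithin_mono _ (fun y hy => ne_of_lt hy))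
    refine ge_of_tendsto htend ?_
    filter_upwards [Ioo_mem_nhdsLT_of_mem (⟨hs0.1, le_refl s0⟩ : s0 ∈ Set.Ioc 0 s0)] with s hs
    rw [slope_def_field]
    have hnum : u x0 s - u x0 s0 ≤ 0 := by
      have : (x0, s) ∈ K := ⟨hx0K, ⟨hs.1.le, hs.2.le.trans hs0.2⟩⟩
      have := hzmax (x0, s) this
      simpa using sub_nonpos.mpr this
    exact div_nonneg_iff.mpr (Or.inr ⟨hnum, by linarith [hs.2]⟩)
  -- spatial first derivative zero
  have hB : ux x0 s0 = 0 := by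
    have hmaxx : IsMaxOn (fun y => u y s0) (Set.Icc 0 1) x0 := by
      intro y hy
      exact hzmax (y, s0) ⟨hy, hs0K⟩
    have hloc : IsLocalMax (fun y => u y s0) x0 :=
      hmaxx.isLocalMax (Icc_mem_nhds hx0.1 hx0.2)
    exact hloc.hasDerivAt_eq_zero (hux x0 hx0 s0 hs0)
  -- spatial second derivative nonpos
  have hC : uxx x0 s0 ≤ 0 := by
    by_contra hc
    push_neg at hc
    have hd2 := huxx x0 hx0 s0 hs0
    have htend : Tendsto (slope (fun y => ux y s0) x0) (𝓝[>] x0) (𝓝 (uxx x0 s0)) :=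
      (hasDerivAt_iff_tendsto_slope.mp hd2).mono_left
        (nhdsWithin_mono _ (fun y hy => ne_of_gt hy))
    have hev : ∀ᶠ y in 𝓝[>] x0, 0 < ux y s0 := by
      filter_upwards [htend.eventually (eventually_gt_nhds hc), self_mem_nhdsWithin] with y hy1 hy2
      rw [slope_def_field, hB, sub_zero] at hy1
      rcases div_pos_iff.mp hy1 with ⟨h, _⟩ | ⟨_, h⟩
      · exact h
      · linarith [sub_pos.mpr (mem_Ioi.mp hy2)]
    obtain ⟨w, hw, hsub⟩ := mem_nhdsGT_iff_exists_Ioo_subset.mp hev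
    set b := min ((x0 + w) / 2) ((x0 + 1) / 2) with hb
    have hx0b : x0 < b := lt_min (by linarith [mem_Ioi.mp hw]) (by linarith [hx0.2])
    have hb1' : b < 1 := lt_of_le_of_lt (min_le_right _ _) (by linarith [hx0.2])
    have hbw : b < w := lt_of_le_of_lt (min_le_left _ _) (by linarith [mem_Ioi.mp hw])
    have hIcc : Set.Icc x0 b ⊆ Set.Ioo (0:ℝ) 1 := fun y hy =>
      ⟨lt_of_lt_of_le hx0.1 hy.1, lt_of_le_of_lt hy.2 hb1'⟩
    have hgc : ContinuousOn (fun y => u y s0) (Set.Icc x0 b) := fun y hy =>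
      ((hux y (hIcc hy) s0 hs0).continuousAt).continuousWithinAt
    have hmono : StrictMonoOn (fun y => u y s0) (Set.Icc x0 b) := by
      apply strictMonoOn_of_deriv_pos (convex_Icc _ _) hgc
      intro y hy
      rw [interior_Icc] at hy
      have hy' : y ∈ Set.Ioo x0 w := ⟨hy.1, hy.2.trans hbw⟩
      have := (hux y (hIcc ⟨hy.1.le, hy.2.le⟩) s0 hs0).deriv
      rw [this]
      exact hsub hy'
    have hlt : u x0 s0 < u b s0 :=
      hmono (Set.left_mem_Icc.mpr hx0b.le) (Set.right_mem_Icc.mpr hx0b.le) hx0b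
    have hle : u b s0 ≤ u x0 s0 :=
      hzmax (b, s0) ⟨⟨by linarith [hx0.1], hb1'.le⟩, hs0K⟩
    linarith
  have := hineq x0 hx0 s0 hs0
  nlinarith [mul_nonneg hn hpos.le, mul_nonneg hμ.le (neg_nonneg.mpr hC)]

theorem heat_boundary_maximum_estimate
    (μ n : ℝ) (hμ : 0 < μ) (hn : 0 ≤ n)
    (f : ℝ → ℝ → ℝ)
    (hf : ContinuousOn (fun p : ℝ × ℝ => f p.1 p.2) (Set.Icc 0 1 ×ˢ Set.Ici 0))
    (d : ℝ → ℝ)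
    (hd : ContinuousOn d (Set.Ici 0))
    (hd0 : d 0 = 0)
    (v vt vx vxx : ℝ → ℝ → ℝ)
    (hvcont : ContinuousOn (fun p : ℝ × ℝ => v p.1 p.2) (Set.Icc 0 1 ×ˢ Set.Ici 0))
    (hvt : ∀ x ∈ Set.Ioo (0:ℝ) 1, ∀ t ∈ Set.Ioi (0:ℝ), HasDerivAt (fun τ => v x τ) (vt x t) t)
    (hvx : ∀ x ∈ Set.Ioo (0:ℝ) 1, ∀ t ∈ Set.Ioi (0:ℝ), HasDerivAt (fun y => v y t) (vx x t) x)
    (hvxx : ∀ x ∈ Set.Ioo (0:ℝ) 1, ∀ t ∈ Set.Ioi (0:ℝ), HasDerivAt (fun y => vx y t) (vxx x t) x)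
    (hvtc : ContinuousOn (fun p : ℝ × ℝ => vt p.1 p.2) (Set.Ioo 0 1 ×ˢ Set.Ioi 0))
    (hvxc : ContinuousOn (fun p : ℝ × ℝ => vx p.1 p.2) (Set.Ioo 0 1 ×ˢ Set.Ioi 0))
    (hvxxc : ContinuousOn (fun p : ℝ × ℝ => vxx p.1 p.2) (Set.Ioo 0 1 ×ˢ Set.Ioi 0))
    (hvpde : ∀ x ∈ Set.Ioo (0:ℝ) 1, ∀ t ∈ Set.Ioi (0:ℝ), vt x t - μ * vxx x t + n * v x t = f x t)
    (hbc : ∀ t : ℝ, 0 ≤ t → v 0 t = 0 ∧ v 1 t = d t)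
    (hic : ∀ x ∈ Set.Icc (0:ℝ) 1, v x 0 = 0) :
    ∀ t : ℝ, 0 < t → ∀ p : ℝ, 2 < p →
      ∀ x ∈ Set.Icc (0:ℝ) 1, ∀ s ∈ Set.Icc (0:ℝ) t,
        |v x s| ≤ sSup ((fun s => |d s|) '' Set.Icc 0 t)
          + (1 / μ) * (2:ℝ) ^ ((5 * p - 8) / (2 * p - 4)) * sSup ((fun p : ℝ × ℝ => |f p.1 p.2|) '' (Set.Icc (0:ℝ) 1 ×ˢ Set.Icc (0:ℝ) t)) := by
  intro t ht p hp x hx s hs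
  set Md := sSup ((fun s => |d s|) '' Set.Icc 0 t) with hMd_def
  set Mf := sSup ((fun p : ℝ × ℝ => |f p.1 p.2|) '' (Set.Icc (0:ℝ) 1 ×ˢ Set.Icc (0:ℝ) t)) with hMf_def
  -- basic facts about the sups
  have hIcc_sub : Set.Icc (0:ℝ) t ⊆ Set.Ici 0 := Set.Icc_subset_Ici_self
  have hrect_sub : (Set.Icc (0:ℝ) 1 ×ˢ Set.Icc (0:ℝ) t) ⊆ (Set.Icc (0:ℝ) 1 ×ˢ Set.Ici 0) :=
    Set.prod_mono subset_rfl hIcc_sub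
  have hDcomp : IsCompact ((fun s => |d s|) '' Set.Icc 0 t) :=
    isCompact_Icc.image_of_continuousOn ((hd.mono hIcc_sub).abs)
  have hFcomp : IsCompact ((fun p : ℝ × ℝ => |f p.1 p.2|) '' (Set.Icc (0:ℝ) 1 ×ˢ Set.Icc (0:ℝ) t)) :=
    (isCompact_Icc.prod isCompact_Icc).image_of_continuousOn ((hf.mono hrect_sub).abs)
  have hMd_le : ∀ s ∈ Set.Icc (0:ℝ) t, |d s| ≤ Md := fun s hs =>
    le_csSup hDcomp.bddAbove ⟨s, hs, rfl⟩
  have hMd0 : 0 ≤ Md := le_trans (abs_nonneg _) (hMd_le 0 ⟨le_refl 0, ht.le⟩)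
  have hMf_le : ∀ y ∈ Set.Icc (0:ℝ) 1, ∀ s ∈ Set.Icc (0:ℝ) t, |f y s| ≤ Mf := fun y hy s hs =>
    le_csSup hFcomp.bddAbove ⟨(y, s), ⟨hy, hs⟩, rfl⟩
  have hMf0 : 0 ≤ Mf := le_trans (abs_nonneg _)
    (hMf_le 0 ⟨le_refl 0, zero_le_one⟩ 0 ⟨le_refl 0, ht.le⟩)
  set k := Mf / (2 * μ) with hk_def
  have hk0 : 0 ≤ k := div_nonneg hMf0 (by linarith)
  have h2mk : 2 * μ * k = Mf := by
    rw [hk_def]; field_simp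
  -- main claim via maximum principle
  have key : ∀ σ : ℝ, |σ| = 1 → ∀ ε : ℝ, 0 < ε → ∀ y ∈ Set.Icc (0:ℝ) 1, ∀ s' ∈ Set.Icc (0:ℝ) t,
      σ * v y s' ≤ Md + k * (2 * y - y ^ 2) + ε * (1 + s') := by
    intro σ hσ ε hε
    have hmp := parabolic_max_principle μ n t hμ hn ht
      (fun y s' => σ * v y s' - (Md + k * (2 * y - y ^ 2)) - ε * (1 + s'))
      (fun y s' => σ * vt y s' - ε)
      (fun y s' => σ * vx y s' - k * (2 - 2 * y))
      (fun y s' => σ * vxx y s' + 2 * k)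
      ?_ ?_ ?_ ?_ ?_ ?_ ?_ ?_
    · intro y hy s' hs'
      have := hmp y hy s' hs'
      linarith
    · -- continuity
      have hc1 : Continuous (fun q : ℝ × ℝ => Md + k * (2 * q.1 - q.1 ^ 2)) :=
        continuous_const.add (continuous_const.mul
          ((continuous_const.mul continuous_fst).sub (continuous_fst.pow 2)))
      have hc2 : Continuous (fun q : ℝ × ℝ => ε * (1 + q.2)) :=
        continuous_const.mul (continuous_const.add continuous_snd)
      exact ((continuousOn_const.mul (hvcont.mono hrect_sub)).sub
        hc1.continuousOn).sub hc2.continuousOn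
    · -- time derivative
      intro y hy s' hs'
      have h1 := (hvt y hy s' (Set.mem_Ioi.mpr hs'.1)).const_mul σ
      have h2 : HasDerivAt (fun τ : ℝ => ε * (1 + τ)) ε s' := by
        simpa using ((hasDerivAt_id s').const_add (1:ℝ)).const_mul ε
      exact ((h1.sub_const _).sub h2)
    · -- spatial derivative
      intro y hy s' hs'
      have h1 := (hvx y hy s' (Set.mem_Ioi.mpr hs'.1)).const_mul σ
      have hW : HasDerivAt (fun z : ℝ => Md + k * (2 * z - z ^ 2)) (k * (2 - 2 * y)) y := by
        have hp2 : HasDerivAt (fun z : ℝ => 2 * z - z ^ 2) (2 - 2 * y) y := by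
          have := ((hasDerivAt_id y).const_mul (2:ℝ)).sub (hasDerivAt_pow 2 y)
          simp at this
          exact this
        exact (hp2.const_mul k).const_add Md
      exact (h1.sub hW).sub_const _
    · -- second spatial derivative
      intro y hy s' hs'
      have h1 := (hvxx y hy s' (Set.mem_Ioi.mpr hs'.1)).const_mul σ
      have hW : HasDerivAt (fun z : ℝ => k * (2 - 2 * z)) (-(2 * k)) y := by
        have : HasDerivAt (fun z : ℝ => 2 - 2 * z) (-2) y := by
          simpa using (((hasDerivAt_id y).const_mul (2:ℝ)).const_sub (2:ℝ))
        have := this.const_mul k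
        exact this.congr_deriv (by ring)
      have := h1.sub hW
      exact this.congr_deriv (by ring)
    · -- differential inequality
      intro y hy s' hs'
      have hpde := hvpde y hy s' (Set.mem_Ioi.mpr hs'.1)
      have hfb : σ * f y s' ≤ Mf := by
        calc σ * f y s' ≤ |σ * f y s'| := le_abs_self _
          _ = |f y s'| := by rw [abs_mul, hσ, one_mul]
          _ ≤ Mf := hMf_le y ⟨hy.1.le, hy.2.le⟩ s' ⟨hs'.1.le, hs'.2⟩
      have hAB : 0 ≤ Md + k * (2 * y - y ^ 2) + ε * (1 + s') := by
        have h1 : 0 ≤ 2 * y - y ^ 2 := by nlinarith [hy.1, hy.2]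
        nlinarith [mul_nonneg hk0 h1, mul_nonneg hε.le (by linarith [hs'.1] : (0:ℝ) ≤ 1 + s')]
      have hnAB : 0 ≤ n * (Md + k * (2 * y - y ^ 2) + ε * (1 + s')) := mul_nonneg hn hAB
      have heq : (σ * vt y s' - ε) - μ * (σ * vxx y s' + 2 * k)
          + n * (σ * v y s' - (Md + k * (2 * y - y ^ 2)) - ε * (1 + s'))
          = σ * f y s' - ε - 2 * μ * k - n * (Md + k * (2 * y - y ^ 2) + ε * (1 + s')) := by
        linear_combination σ * hpde
      rw [heq, h2mk]
      linarith
    · -- boundary x = 0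
      intro s' hs'
      have h0 := (hbc s' hs'.1).1
      simp only [h0]
      have : 0 ≤ ε * (1 + s') := mul_nonneg hε.le (by linarith [hs'.1])
      nlinarith
    · -- boundary x = 1
      intro s' hs'
      have h1 := (hbc s' hs'.1).2
      simp only [h1]
      have hdb : σ * d s' ≤ Md := by
        calc σ * d s' ≤ |σ * d s'| := le_abs_self _
          _ = |d s'| := by rw [abs_mul, hσ, one_mul]
          _ ≤ Md := hMd_le s' hs'
      have : 0 ≤ ε * (1 + s') := mul_nonneg hε.le (by linarith [hs'.1])
      nlinarith
    · -- initial condition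
      intro y hy
      simp only [hic y hy]
      have h1 : 0 ≤ 2 * y - y ^ 2 := by nlinarith [hy.1, hy.2]
      nlinarith [mul_nonneg hk0 h1]
  -- pass to the limit ε → 0
  have habs : |v x s| ≤ Md + k * (2 * x - x ^ 2) := by
    have h1s : (0:ℝ) < 1 + s := by linarith [hs.1]
    refine le_of_forall_pos_le_add ?_
    intro ε' hε'
    have hεpos : 0 < ε' / (1 + s) := div_pos hε' h1s
    have hplus := key 1 (by norm_num) (ε' / (1 + s)) hεpos x hx s hs
    have hminus := key (-1) (by norm_num) (ε' / (1 + s)) hεpos x hx s hs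
    rw [one_mul] at hplus
    have hεeq : ε' / (1 + s) * (1 + s) = ε' := div_mul_cancel₀ _ (ne_of_gt h1s)
    rw [hεeq] at hplus hminus
    rw [abs_le]
    constructor <;> nlinarith [hplus, hminus]
  -- final estimate
  have hWle : Md + k * (2 * x - x ^ 2) ≤ Md + k := by
    nlinarith [mul_nonneg hk0 (sq_nonneg (1 - x))]
  have he0 : 0 ≤ (5 * p - 8) / (2 * p - 4) := div_nonneg (by linarith) (by linarith)
  have hc1 : (1:ℝ) ≤ (2:ℝ) ^ ((5 * p - 8) / (2 * p - 4)) := by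
    calc (1:ℝ) = (2:ℝ) ^ (0:ℝ) := (rpow_zero 2).symm
      _ ≤ (2:ℝ) ^ ((5 * p - 8) / (2 * p - 4)) :=
        rpow_le_rpow_of_exponent_le (by norm_num) he0
  have hkle : k ≤ 1 / μ * (2:ℝ) ^ ((5 * p - 8) / (2 * p - 4)) * Mf := by
    rw [hk_def, div_le_iff₀ (by positivity : (0:ℝ) < 2 * μ)]
    rw [div_mul_eq_mul_div, one_mul, div_mul_eq_mul_div, div_mul_eq_mul_div, le_div_iff₀ hμ]
    nlinarith [mul_le_mul_of_nonneg_left hc1 hMf0]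
  calc |v x s| ≤ Md + k * (2 * x - x ^ 2) := habs
    _ ≤ Md + k := hWle
    _ ≤ Md + 1 / μ * (2:ℝ) ^ ((5 * p - 8) / (2 * p - 4)) * Mf := by linarith
end

section
/- (Theorem 8/Corollary 8) Let μ > 0 and m, n ∈ ℝ with m²/(4μ) + n ≥ 0, and let w : [0,1] × [0,∞) → ℝ be a classical solution of w_t − μ w_xx + m w_x + n w = 0 on (0,1) × (0,∞) with homogeneous Dirichlet boundary conditions w(0,t) = w(1,t) = 0 for all t ≥ 0 and initial condition w(x,0) = u₀(x). Then for every t > 0, max_{x∈[0,1]} |w(x,t)| ≤ e^{|m|/μ} · √(2 + m²/(2μ²)) · ‖u₀‖_{H¹(0,1)} · e^{−(m²/(4μ)+n+2μ)t}. -/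
open Real MeasureTheory intervalIntegral Set Filter Topology

lemma aux_deriv_nonneg_of_left_max {f : ℝ → ℝ} {d a b : ℝ} (hab : a < b)
    (hf : HasDerivAt f d b) (hmax : ∀ s ∈ Set.Icc a b, f s ≤ f b) : 0 ≤ d := by
  have hslope := hasDerivAt_iff_tendsto_slope.1 hf
  have h2 : Tendsto (slope f b) (𝓝[<] b) (𝓝 d) :=
    hslope.mono_left (nhdsWithin_mono b (fun y hy => ne_of_lt hy))
  refine ge_of_tendsto h2 ?_
  filter_upwards [Ioo_mem_nhdsLT_of_mem (⟨hab, le_refl b⟩ : b ∈ Set.Ioc a b)] with s hs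
  have h1 : f s ≤ f b := hmax s ⟨hs.1.le, hs.2.le⟩
  rw [slope_def_field]
  exact div_nonneg_iff.2 (Or.inr ⟨by linarith, by linarith [hs.2]⟩)

lemma aux_second_deriv_nonpos {f f1 : ℝ → ℝ} {x₀ c l r : ℝ}
    (hl : l < x₀) (hr : x₀ < r)
    (hd : ∀ y ∈ Set.Ioo l r, HasDerivAt f (f1 y) y)
    (hd2 : HasDerivAt f1 c x₀) (hmax : IsLocalMax f x₀) : c ≤ 0 := by
  by_contra hc
  push_neg at hc
  have hf1x : f1 x₀ = 0 := hmax.hasDerivAt_eq_zero (hd x₀ ⟨hl, hr⟩)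
  have hslope := hasDerivAt_iff_tendsto_slope.1 hd2
  have h2 : Tendsto (slope f1 x₀) (𝓝[>] x₀) (𝓝 c) :=
    hslope.mono_left (nhdsWithin_mono _ (fun y hy => ne_of_gt hy))
  have hev : ∀ᶠ y in 𝓝[>] x₀, 0 < slope f1 x₀ y := h2.eventually (lt_mem_nhds hc)
  have hev2 : ∀ᶠ y in 𝓝[>] x₀, 0 < f1 y := by
    filter_upwards [hev, self_mem_nhdsWithin] with y h hy
    rw [slope_def_field, hf1x, sub_zero] at h
    have hy' : 0 < y - x₀ := sub_pos.2 hy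
    rcases div_pos_iff.1 h with ⟨h1, _⟩ | ⟨_, h2⟩
    · exact h1
    · linarith
  have hev3 : ∀ᶠ y in 𝓝[>] x₀, f y ≤ f x₀ := hmax.filter_mono nhdsWithin_le_nhds
  have hev4 : ∀ᶠ y in 𝓝[>] x₀, y < r := by
    filter_upwards [Ioo_mem_nhdsGT_of_mem (⟨le_refl x₀, hr⟩ : x₀ ∈ Set.Ico x₀ r)] with y hy
    exact hy.2
  obtain ⟨u, hu, hsub⟩ := mem_nhdsGT_iff_exists_Ioc_subset.1 ((hev2.and (hev3.and hev4)).filter_mono le_rfl)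
  have huE := hsub (⟨hu, le_refl u⟩ : u ∈ Set.Ioc x₀ u)
  have hur : u < r := huE.2.2
  have hmono : StrictMonoOn f (Set.Icc x₀ u) := by
    apply strictMonoOn_of_hasDerivWithinAt_pos (convex_Icc _ _) (f' := f1)
    · intro y hy
      exact ((hd y ⟨lt_of_lt_of_le hl hy.1, lt_of_le_of_lt hy.2 hur⟩).continuousAt).continuousWithinAt
    · intro y hy
      rw [interior_Icc] at hy
      exact (hd y ⟨lt_trans hl hy.1, lt_trans hy.2 hur⟩).hasDerivWithinAt
    · intro y hy
      rw [interior_Icc] at hy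
      exact (hsub ⟨hy.1, hy.2.le⟩).1
  have h5 : f x₀ < f u := hmono (Set.left_mem_Icc.2 (le_of_lt hu)) (Set.right_mem_Icc.2 (le_of_lt hu)) hu
  linarith [huE.2.1]

lemma aux_cs {g : ℝ → ℝ} {a b : ℝ} (hab : a ≤ b) (hg : ContinuousOn g (Set.Icc a b)) :
    (∫ s in a..b, g s) ^ 2 ≤ (b - a) * ∫ s in a..b, (g s) ^ 2 := by
  rcases eq_or_lt_of_le hab with rfl | hlt
  · simp
  · have huIcc : Set.uIcc a b = Set.Icc a b := Set.uIcc_of_le hab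
    have hgi : IntervalIntegrable g volume a b := (huIcc ▸ hg).intervalIntegrable
    have hg2i : IntervalIntegrable (fun s => (g s) ^ 2) volume a b :=
      (huIcc ▸ (hg.pow 2)).intervalIntegrable
    set A := ∫ s in a..b, g s with hA
    set c := A / (b - a) with hc
    have key : 0 ≤ ∫ s in a..b, (g s - c) ^ 2 :=
      intervalIntegral.integral_nonneg hab (fun u _ => sq_nonneg _)
    have e1 : (∫ s in a..b, (g s - c) ^ 2)
        = ∫ s in a..b, ((g s) ^ 2 - (2 * c) * g s + c ^ 2) :=
      intervalIntegral.integral_congr (fun s _ => by ring)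
    have e2 : (∫ s in a..b, ((g s) ^ 2 - (2 * c) * g s + c ^ 2))
        = (∫ s in a..b, (g s) ^ 2) - (2 * c) * A + (b - a) * c ^ 2 := by
      rw [intervalIntegral.integral_add (hg2i.sub (hgi.const_mul _)) intervalIntegrable_const,
        intervalIntegral.integral_sub hg2i (hgi.const_mul _),
        intervalIntegral.integral_const_mul, intervalIntegral.integral_const]
      simp [smul_eq_mul]
      exact Or.inl hA.symm
    have key2 : 0 ≤ (∫ s in a..b, (g s) ^ 2) - (2 * c) * A + (b - a) * c ^ 2 := by
      rw [← e2, ← e1]; exact key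
    have hba : (0:ℝ) < b - a := sub_pos.2 hlt
    have h2 : (2 * c) * A = 2 * A ^ 2 / (b - a) := by rw [hc]; field_simp
    have h3 : (b - a) * c ^ 2 = A ^ 2 / (b - a) := by rw [hc]; field_simp [hba.ne']
    have key3 : A ^ 2 / (b - a) ≤ ∫ s in a..b, (g s) ^ 2 := by
      rw [h2, h3] at key2
      have : 2 * A ^ 2 / (b - a) - A ^ 2 / (b - a) = A ^ 2 / (b - a) := by ring
      linarith [key2, this]
    have := (div_le_iff₀ hba).1 key3
    linarith

lemma aux_init_bound (u₀ u₀' : ℝ → ℝ)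
    (hu₀c1 : ∀ x ∈ Set.Icc (0:ℝ) 1, HasDerivWithinAt u₀ (u₀' x) (Set.Icc 0 1) x)
    (hu₀dc : ContinuousOn u₀' (Set.Icc 0 1))
    (hu₀0 : u₀ 0 = 0) (hu₀1 : u₀ 1 = 0) :
    ∀ x ∈ Set.Icc (0:ℝ) 1,
      |u₀ x| ≤ Real.sqrt (min x (1-x)) *
        Real.sqrt ((∫ s in (0:ℝ)..1, (u₀ s)^2) + ∫ s in (0:ℝ)..1, (u₀' s)^2) := by
  intro x hx
  obtain ⟨hx0, hx1⟩ := hx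
  have hu0cont : ContinuousOn u₀ (Set.Icc 0 1) := fun y hy => (hu₀c1 y hy).continuousWithinAt
  have hd : ∀ y ∈ Set.Ioo (0:ℝ) 1, HasDerivAt u₀ (u₀' y) y := by
    intro y hy
    exact (hu₀c1 y ⟨hy.1.le, hy.2.le⟩).hasDerivAt (Icc_mem_nhds hy.1 hy.2)
  have hint01 : IntervalIntegrable u₀' volume 0 1 := by
    rw [show u₀' = fun s => u₀' s from rfl]
    exact (Set.uIcc_of_le (by norm_num : (0:ℝ) ≤ 1) ▸ hu₀dc).intervalIntegrable
  have hint2 : IntervalIntegrable (fun s => (u₀' s) ^ 2) volume 0 1 :=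
    (Set.uIcc_of_le (by norm_num : (0:ℝ) ≤ 1) ▸ (hu₀dc.pow 2)).intervalIntegrable
  -- FTC on [0, x]
  have hftc1 : (∫ s in (0:ℝ)..x, u₀' s) = u₀ x := by
    have := intervalIntegral.integral_eq_sub_of_hasDeriv_right_of_le hx0
      (hu0cont.mono (Set.Icc_subset_Icc le_rfl hx1))
      (fun y hy => (hd y ⟨hy.1, lt_of_lt_of_le hy.2 hx1⟩).hasDerivWithinAt)
      ((hu₀dc.mono (Set.Icc_subset_Icc le_rfl hx1)).intervalIntegrable_of_Icc hx0)
    rw [this, hu₀0, sub_zero]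
  have hftc2 : (∫ s in x..1, u₀' s) = -u₀ x := by
    have := intervalIntegral.integral_eq_sub_of_hasDeriv_right_of_le hx1
      (hu0cont.mono (Set.Icc_subset_Icc hx0 le_rfl))
      (fun y hy => (hd y ⟨lt_of_le_of_lt hx0 hy.1, hy.2⟩).hasDerivWithinAt)
      ((hu₀dc.mono (Set.Icc_subset_Icc hx0 le_rfl)).intervalIntegrable_of_Icc hx1)
    rw [this, hu₀1, zero_sub]
  set I2 := ∫ s in (0:ℝ)..1, (u₀' s) ^ 2 with hI2
  have hmono1 : (∫ s in (0:ℝ)..x, (u₀' s) ^ 2) ≤ I2 :=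
    intervalIntegral.integral_mono_interval le_rfl hx0 hx1
      (Filter.Eventually.of_forall fun s => sq_nonneg _) hint2
  have hmono2 : (∫ s in x..(1:ℝ), (u₀' s) ^ 2) ≤ I2 :=
    intervalIntegral.integral_mono_interval hx0 hx1 le_rfl
      (Filter.Eventually.of_forall fun s => sq_nonneg _) hint2
  have hcs1 : (u₀ x) ^ 2 ≤ x * I2 := by
    have := aux_cs hx0 (hu₀dc.mono (Set.Icc_subset_Icc le_rfl hx1))
    rw [hftc1, sub_zero] at this
    nlinarith [this, hmono1, hx0]
  have hcs2 : (u₀ x) ^ 2 ≤ (1 - x) * I2 := by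
    have := aux_cs hx1 (hu₀dc.mono (Set.Icc_subset_Icc hx0 le_rfl))
    rw [hftc2, neg_sq] at this
    nlinarith [this, hmono2, sub_nonneg.2 hx1]
  have hI1 : 0 ≤ ∫ s in (0:ℝ)..1, (u₀ s) ^ 2 :=
    intervalIntegral.integral_nonneg (by norm_num) (fun s _ => sq_nonneg _)
  have hI2nn : 0 ≤ I2 :=
    intervalIntegral.integral_nonneg (by norm_num) (fun s _ => sq_nonneg _)
  have hmin : (u₀ x) ^ 2 ≤ min x (1 - x) * ((∫ s in (0:ℝ)..1, (u₀ s) ^ 2) + I2) := by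
    rcases min_cases x (1 - x) with ⟨hm, _⟩ | ⟨hm, _⟩ <;> rw [hm] <;> nlinarith
  have hminnn : 0 ≤ min x (1 - x) := le_min hx0 (by linarith)
  calc |u₀ x| = Real.sqrt ((u₀ x) ^ 2) := (Real.sqrt_sq_eq_abs _).symm
    _ ≤ Real.sqrt (min x (1 - x) * ((∫ s in (0:ℝ)..1, (u₀ s) ^ 2) + I2)) :=
        Real.sqrt_le_sqrt hmin
    _ = Real.sqrt (min x (1 - x)) * Real.sqrt ((∫ s in (0:ℝ)..1, (u₀ s) ^ 2) + I2) :=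
        Real.sqrt_mul hminnn _

noncomputable def barS (x : ℝ) : ℝ := Real.sqrt (Real.sin (π * x))
noncomputable def barS1 (x : ℝ) : ℝ := π * Real.cos (π * x) / (2 * barS x)
noncomputable def barS2 (x : ℝ) : ℝ :=
  -(π ^ 2 / 2) * barS x - π ^ 2 * (Real.cos (π * x)) ^ 2 / (4 * (barS x) ^ 3)

lemma barS_pos {x : ℝ} (hx : x ∈ Set.Ioo (0:ℝ) 1) : 0 < barS x := by
  have hs : 0 < Real.sin (π * x) := by
    apply Real.sin_pos_of_pos_of_lt_pi
    · exact mul_pos Real.pi_pos hx.1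
    · nlinarith [Real.pi_pos, hx.2]
  exact Real.sqrt_pos.2 hs

lemma barS_sq {x : ℝ} (hx : x ∈ Set.Ioo (0:ℝ) 1) : (barS x) ^ 2 = Real.sin (π * x) := by
  have hs : 0 ≤ Real.sin (π * x) := by
    apply Real.sin_nonneg_of_nonneg_of_le_pi
    · exact le_of_lt (mul_pos Real.pi_pos hx.1)
    · nlinarith [Real.pi_pos, hx.2]
  exact Real.sq_sqrt hs

lemma barS_hasDeriv {x : ℝ} (hx : x ∈ Set.Ioo (0:ℝ) 1) : HasDerivAt barS (barS1 x) x := by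
  have hS := barS_pos hx
  have hlin : HasDerivAt (fun y : ℝ => π * y) π x := by
    simpa using (hasDerivAt_id x).const_mul π
  have hsin : HasDerivAt (fun y : ℝ => Real.sin (π * y)) (Real.cos (π * x) * π) x :=
    (Real.hasDerivAt_sin (π * x)).comp x hlin
  have hne : Real.sin (π * x) ≠ 0 := by
    have := barS_sq hx
    nlinarith [hS]
  have hsqrt := (Real.hasDerivAt_sqrt hne).comp x hsin
  refine hsqrt.congr_deriv ?_
  rw [barS1, barS]
  field_simp

lemma barS1_hasDeriv {x : ℝ} (hx : x ∈ Set.Ioo (0:ℝ) 1) : HasDerivAt barS1 (barS2 x) x := by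
  have hS := barS_pos hx
  have hlin : HasDerivAt (fun y : ℝ => π * y) π x := by
    simpa using (hasDerivAt_id x).const_mul π
  have hcos : HasDerivAt (fun y : ℝ => Real.cos (π * y)) (-Real.sin (π * x) * π) x :=
    (Real.hasDerivAt_cos (π * x)).comp x hlin
  have hnum : HasDerivAt (fun y : ℝ => π * Real.cos (π * y)) (π * (-Real.sin (π * x) * π)) x :=
    hcos.const_mul π
  have hden : HasDerivAt (fun y : ℝ => 2 * barS y) (2 * barS1 x) x :=
    (barS_hasDeriv hx).const_mul 2
  have hdne : 2 * barS x ≠ 0 := by positivity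
  have hdiv := hnum.div hden hdne
  refine hdiv.congr_deriv ?_
  have hsq := barS_sq hx
  rw [barS2, barS1]
  rw [← hsq]
  field_simp
  ring

noncomputable def barφ (a x : ℝ) : ℝ := Real.exp (a * x) * barS x
noncomputable def barφ1 (a x : ℝ) : ℝ := Real.exp (a * x) * (a * barS x + barS1 x)
noncomputable def barφ2 (a x : ℝ) : ℝ :=
  Real.exp (a * x) * (a ^ 2 * barS x + 2 * a * barS1 x + barS2 x)

lemma barφ_continuous (a : ℝ) : Continuous (barφ a) := by
  unfold barφ barS
  exact (Real.continuous_exp.comp (continuous_const.mul continuous_id)).mul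
    (Real.continuous_sqrt.comp (Real.continuous_sin.comp (continuous_const.mul continuous_id)))

lemma barφ_hasDeriv {a x : ℝ} (hx : x ∈ Set.Ioo (0:ℝ) 1) :
    HasDerivAt (barφ a) (barφ1 a x) x := by
  have hexp : HasDerivAt (fun y : ℝ => Real.exp (a * y)) (Real.exp (a * x) * a) x :=
    (Real.hasDerivAt_exp (a * x)).comp x (by simpa using (hasDerivAt_id x).const_mul a)
  have := hexp.mul (barS_hasDeriv hx)
  refine this.congr_deriv ?_
  rw [barφ1]; ring

lemma barφ1_hasDeriv {a x : ℝ} (hx : x ∈ Set.Ioo (0:ℝ) 1) :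
    HasDerivAt (fun y => barφ1 a y) (barφ2 a x) x := by
  have hexp : HasDerivAt (fun y : ℝ => Real.exp (a * y)) (Real.exp (a * x) * a) x :=
    (Real.hasDerivAt_exp (a * x)).comp x (by simpa using (hasDerivAt_id x).const_mul a)
  have hin : HasDerivAt (fun y => a * barS y + barS1 y) (a * barS1 x + barS2 x) x :=
    ((barS_hasDeriv hx).const_mul a).add (barS1_hasDeriv hx)
  have := hexp.mul hin
  refine this.congr_deriv ?_
  rw [barφ2]; ring

lemma barrier_neg (μ m : ℝ) (hμ : 0 < μ) {x : ℝ} (hx : x ∈ Set.Ioo (0:ℝ) 1) :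
    (m ^ 2 / (4 * μ) + 2 * μ) * barφ (m / (2 * μ)) x + μ * barφ2 (m / (2 * μ)) x
      - m * barφ1 (m / (2 * μ)) x < 0 := by
  have hS := barS_pos hx
  have hE : (0:ℝ) < Real.exp (m / (2 * μ) * x) := Real.exp_pos _
  have heq : (m ^ 2 / (4 * μ) + 2 * μ) * barφ (m / (2 * μ)) x + μ * barφ2 (m / (2 * μ)) x
      - m * barφ1 (m / (2 * μ)) x
      = Real.exp (m / (2 * μ) * x) *
        (μ * (2 - π ^ 2 / 2) * barS x - μ * π ^ 2 * (Real.cos (π * x)) ^ 2 / (4 * (barS x) ^ 3)) := by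
    rw [barφ, barφ1, barφ2, barS2]
    field_simp
    ring
  rw [heq]
  have hππ : (0:ℝ) < π ^ 2 / 2 - 2 := by nlinarith [Real.pi_gt_three]
  have h1 : μ * (2 - π ^ 2 / 2) * barS x < 0 := by
    nlinarith [mul_pos (mul_pos hμ hππ) hS]
  have h2 : 0 ≤ μ * π ^ 2 * (Real.cos (π * x)) ^ 2 / (4 * (barS x) ^ 3) := by positivity
  exact mul_neg_of_pos_of_neg hE (by linarith)

noncomputable def zfun (μ m n K : ℝ) (w : ℝ → ℝ → ℝ) (p : ℝ × ℝ) : ℝ :=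
  Real.exp (n * p.2) * w p.1 p.2
    - K * Real.exp (-(m ^ 2 / (4 * μ) + 2 * μ) * p.2) * barφ (m / (2 * μ)) p.1

lemma core (μ m n K : ℝ) (hμ : 0 < μ) (hK : 0 < K)
    (w wt wx wxx : ℝ → ℝ → ℝ)
    (hwcont : ContinuousOn (fun p : ℝ × ℝ => w p.1 p.2) (Set.Icc 0 1 ×ˢ Set.Ici 0))
    (hwt : ∀ x ∈ Set.Ioo (0:ℝ) 1, ∀ t ∈ Set.Ioi (0:ℝ), HasDerivAt (fun τ => w x τ) (wt x t) t)
    (hwx : ∀ x ∈ Set.Ioo (0:ℝ) 1, ∀ t ∈ Set.Ioi (0:ℝ), HasDerivAt (fun y => w y t) (wx x t) x)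
    (hwxx : ∀ x ∈ Set.Ioo (0:ℝ) 1, ∀ t ∈ Set.Ioi (0:ℝ), HasDerivAt (fun y => wx y t) (wxx x t) x)
    (hwpde : ∀ x ∈ Set.Ioo (0:ℝ) 1, ∀ t ∈ Set.Ioi (0:ℝ),
      wt x t - μ * wxx x t + m * wx x t + n * w x t = 0)
    (hbc : ∀ t : ℝ, 0 ≤ t → w 0 t = 0 ∧ w 1 t = 0)
    (hinit : ∀ x ∈ Set.Icc (0:ℝ) 1, w x 0 ≤ K * barφ (m / (2 * μ)) x)
    (T : ℝ) (hT : 0 < T) :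
    ∀ x ∈ Set.Icc (0:ℝ) 1,
      w x T ≤ K * barφ (m / (2 * μ)) x * Real.exp (-(m ^ 2 / (4 * μ) + n + 2 * μ) * T) := by
  set Q : Set (ℝ × ℝ) := Set.Icc (0:ℝ) 1 ×ˢ Set.Icc (0:ℝ) T with hQdef
  have hQsub : Q ⊆ Set.Icc (0:ℝ) 1 ×ˢ Set.Ici (0:ℝ) :=
    Set.prod_mono subset_rfl (Set.Icc_subset_Ici_self)
  have hzcont : ContinuousOn (zfun μ m n K w) Q := by
    unfold zfun
    apply ContinuousOn.sub
    · exact ((Real.continuous_exp.comp (continuous_const.mul continuous_snd)).continuousOn).mul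
        (hwcont.mono hQsub)
    · apply Continuous.continuousOn
      exact ((continuous_const.mul (Real.continuous_exp.comp
        (continuous_const.mul continuous_snd))).mul ((barφ_continuous _).comp continuous_fst))
  obtain ⟨p₀, hp₀Q, hpmax⟩ := (isCompact_Icc.prod isCompact_Icc).exists_isMaxOn
    ⟨(0, 0), Set.mem_prod.2 ⟨⟨le_rfl, zero_le_one⟩, ⟨le_rfl, hT.le⟩⟩⟩ hzcont
  have hz : ∀ p ∈ Q, zfun μ m n K w p ≤ 0 := by
    by_contra hpos
    push_neg at hpos
    obtain ⟨q, hqQ, hq⟩ := hpos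
    obtain ⟨x₀, t₀⟩ := p₀
    have hmax0 : 0 < zfun μ m n K w (x₀, t₀) := lt_of_lt_of_le hq (hpmax hqQ)
    have hx₀ : x₀ ∈ Set.Icc (0:ℝ) 1 := hp₀Q.1
    have ht₀ : t₀ ∈ Set.Icc (0:ℝ) T := hp₀Q.2
    have hφ0 : barφ (m / (2 * μ)) 0 = 0 := by simp [barφ, barS]
    have hφone : barφ (m / (2 * μ)) 1 = 0 := by simp [barφ, barS, Real.sin_pi]
    have hx₀0 : x₀ ≠ 0 := by
      rintro rfl
      simp only [zfun, (hbc t₀ ht₀.1).1, hφ0] at hmax0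
      norm_num at hmax0
    have hx₀1 : x₀ ≠ 1 := by
      rintro rfl
      simp only [zfun, (hbc t₀ ht₀.1).2, hφone] at hmax0
      norm_num at hmax0
    have ht₀0 : t₀ ≠ 0 := by
      rintro rfl
      simp only [zfun, mul_zero, Real.exp_zero, one_mul, mul_one] at hmax0
      nlinarith [hinit x₀ hx₀]
    have hx₀io : x₀ ∈ Set.Ioo (0:ℝ) 1 :=
      ⟨lt_of_le_of_ne hx₀.1 (Ne.symm hx₀0), lt_of_le_of_ne hx₀.2 hx₀1⟩
    have ht₀pos : (0:ℝ) < t₀ := lt_of_le_of_ne ht₀.1 (Ne.symm ht₀0)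
    have ht₀T : t₀ ≤ T := ht₀.2
    -- time derivative fact
    have hexp1 : HasDerivAt (fun τ : ℝ => Real.exp (n * τ)) (Real.exp (n * t₀) * n) t₀ :=
      (Real.hasDerivAt_exp (n * t₀)).comp t₀ (by simpa using (hasDerivAt_id t₀).const_mul n)
    have hexp2 : HasDerivAt (fun τ : ℝ => Real.exp (-(m ^ 2 / (4 * μ) + 2 * μ) * τ))
        (Real.exp (-(m ^ 2 / (4 * μ) + 2 * μ) * t₀) * (-(m ^ 2 / (4 * μ) + 2 * μ))) t₀ :=
      (Real.hasDerivAt_exp _).comp t₀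
        (by simpa only [mul_one] using (hasDerivAt_id' t₀).const_mul (-(m ^ 2 / (4 * μ) + 2 * μ)))
    have hgd : HasDerivAt (fun τ => zfun μ m n K w (x₀, τ))
        (Real.exp (n * t₀) * n * w x₀ t₀ + Real.exp (n * t₀) * wt x₀ t₀
          - K * (Real.exp (-(m ^ 2 / (4 * μ) + 2 * μ) * t₀) * (-(m ^ 2 / (4 * μ) + 2 * μ)))
            * barφ (m / (2 * μ)) x₀) t₀ := by
      exact (hexp1.mul (hwt x₀ hx₀io t₀ ht₀pos)).sub
        ((hexp2.const_mul K).mul_const (barφ (m / (2 * μ)) x₀))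
    have h1 : 0 ≤ Real.exp (n * t₀) * n * w x₀ t₀ + Real.exp (n * t₀) * wt x₀ t₀
        - K * (Real.exp (-(m ^ 2 / (4 * μ) + 2 * μ) * t₀) * (-(m ^ 2 / (4 * μ) + 2 * μ)))
          * barφ (m / (2 * μ)) x₀ := by
      refine aux_deriv_nonneg_of_left_max ht₀pos hgd ?_
      intro s hs
      exact hpmax (Set.mem_prod.2 ⟨hx₀, ⟨hs.1, hs.2.trans ht₀T⟩⟩)
    -- spatial derivative facts
    have hfd : ∀ y ∈ Set.Ioo (0:ℝ) 1, HasDerivAt (fun y => zfun μ m n K w (y, t₀))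
        (Real.exp (n * t₀) * wx y t₀
          - K * Real.exp (-(m ^ 2 / (4 * μ) + 2 * μ) * t₀) * barφ1 (m / (2 * μ)) y) y := by
      intro y hy
      exact ((hwx y hy t₀ ht₀pos).const_mul (Real.exp (n * t₀))).sub
        ((barφ_hasDeriv hy).const_mul (K * Real.exp (-(m ^ 2 / (4 * μ) + 2 * μ) * t₀)))
    have hf2d : HasDerivAt (fun y => Real.exp (n * t₀) * wx y t₀
          - K * Real.exp (-(m ^ 2 / (4 * μ) + 2 * μ) * t₀) * barφ1 (m / (2 * μ)) y)
        (Real.exp (n * t₀) * wxx x₀ t₀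
          - K * Real.exp (-(m ^ 2 / (4 * μ) + 2 * μ) * t₀) * barφ2 (m / (2 * μ)) x₀) x₀ :=
      ((hwxx x₀ hx₀io t₀ ht₀pos).const_mul (Real.exp (n * t₀))).sub
        ((barφ1_hasDeriv hx₀io).const_mul (K * Real.exp (-(m ^ 2 / (4 * μ) + 2 * μ) * t₀)))
    have hlocmax : IsLocalMax (fun y => zfun μ m n K w (y, t₀)) x₀ := by
      filter_upwards [isOpen_Ioo.mem_nhds hx₀io] with y hy
      exact hpmax (Set.mem_prod.2 ⟨Set.Ioo_subset_Icc_self hy, ht₀⟩)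
    have h2 : Real.exp (n * t₀) * wx x₀ t₀
        - K * Real.exp (-(m ^ 2 / (4 * μ) + 2 * μ) * t₀) * barφ1 (m / (2 * μ)) x₀ = 0 :=
      hlocmax.hasDerivAt_eq_zero (hfd x₀ hx₀io)
    have h3 : Real.exp (n * t₀) * wxx x₀ t₀
        - K * Real.exp (-(m ^ 2 / (4 * μ) + 2 * μ) * t₀) * barφ2 (m / (2 * μ)) x₀ ≤ 0 :=
      aux_second_deriv_nonpos hx₀io.1 hx₀io.2 hfd hf2d hlocmax
    -- combine
    have hpde := hwpde x₀ hx₀io t₀ ht₀pos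
    have hbar := barrier_neg μ m hμ hx₀io
    have hApde : Real.exp (n * t₀) * (wt x₀ t₀ - μ * wxx x₀ t₀ + m * wx x₀ t₀ + n * w x₀ t₀)
        = 0 := by rw [hpde, mul_zero]
    have hEpos : 0 < K * Real.exp (-(m ^ 2 / (4 * μ) + 2 * μ) * t₀) :=
      mul_pos hK (Real.exp_pos _)
    have hEbar : K * Real.exp (-(m ^ 2 / (4 * μ) + 2 * μ) * t₀) *
        ((m ^ 2 / (4 * μ) + 2 * μ) * barφ (m / (2 * μ)) x₀ + μ * barφ2 (m / (2 * μ)) x₀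
          - m * barφ1 (m / (2 * μ)) x₀) < 0 := mul_neg_of_pos_of_neg hEpos hbar
    have hm2 : m * (Real.exp (n * t₀) * wx x₀ t₀
        - K * Real.exp (-(m ^ 2 / (4 * μ) + 2 * μ) * t₀) * barφ1 (m / (2 * μ)) x₀) = 0 := by
      rw [h2, mul_zero]
    have hμ3 : 0 ≤ μ * (K * Real.exp (-(m ^ 2 / (4 * μ) + 2 * μ) * t₀) * barφ2 (m / (2 * μ)) x₀
        - Real.exp (n * t₀) * wxx x₀ t₀) := mul_nonneg hμ.le (by linarith)
    linarith [h1, hApde, hm2, hμ3, hEbar]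
  -- conclude
  intro x hx
  have hzx := hz (x, T) (Set.mem_prod.2 ⟨hx, ⟨hT.le, le_rfl⟩⟩)
  simp only [zfun] at hzx
  have hkey : Real.exp (n * T) * (K * barφ (m / (2 * μ)) x
      * Real.exp (-(m ^ 2 / (4 * μ) + n + 2 * μ) * T))
      = K * Real.exp (-(m ^ 2 / (4 * μ) + 2 * μ) * T) * barφ (m / (2 * μ)) x := by
    rw [show Real.exp (n * T) * (K * barφ (m / (2 * μ)) x
        * Real.exp (-(m ^ 2 / (4 * μ) + n + 2 * μ) * T))
        = K * (Real.exp (n * T) * Real.exp (-(m ^ 2 / (4 * μ) + n + 2 * μ) * T))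
          * barφ (m / (2 * μ)) x by ring, ← Real.exp_add]
    ring_nf
  have hexpT : 0 < Real.exp (n * T) := Real.exp_pos _
  rw [← mul_le_mul_iff_right₀ hexpT, hkey]
  linarith [hzx]

lemma barφ_nonneg (a x : ℝ) : 0 ≤ barφ a x :=
  mul_nonneg (Real.exp_pos _).le (Real.sqrt_nonneg _)

lemma aux_min_le_barφ (μ m : ℝ) (hμ : 0 < μ) {x : ℝ} (hx : x ∈ Set.Icc (0:ℝ) 1) :
    Real.sqrt (min x (1 - x)) ≤ Real.sqrt 2 * Real.exp (|m| / (2 * μ)) * barφ (m / (2 * μ)) x := by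
  obtain ⟨hx0, hx1⟩ := hx
  have hsin : min x (1 - x) ≤ Real.sin (π * x) := by
    rcases le_or_gt x (1 / 2) with h | h
    · have h0 : 2 / π * (π * x) ≤ Real.sin (π * x) :=
        Real.mul_le_sin (mul_nonneg Real.pi_pos.le hx0) (by nlinarith [Real.pi_pos])
      have h1 : 2 / π * (π * x) = 2 * x := by field_simp
      calc min x (1 - x) ≤ x := min_le_left _ _
        _ ≤ 2 * x := by linarith
        _ ≤ Real.sin (π * x) := by rw [← h1]; exact h0
    · have h0 : 2 / π * (π * (1 - x)) ≤ Real.sin (π * (1 - x)) :=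
        Real.mul_le_sin (mul_nonneg Real.pi_pos.le (by linarith)) (by nlinarith [Real.pi_pos])
      have h1 : 2 / π * (π * (1 - x)) = 2 * (1 - x) := by field_simp
      have h2 : Real.sin (π * (1 - x)) = Real.sin (π * x) := by
        rw [show π * (1 - x) = π - π * x by ring, Real.sin_pi_sub]
      calc min x (1 - x) ≤ 1 - x := min_le_right _ _
        _ ≤ 2 * (1 - x) := by linarith
        _ ≤ Real.sin (π * x) := by rw [← h2, ← h1]; exact h0
  have hSx : Real.sqrt (min x (1 - x)) ≤ barS x := Real.sqrt_le_sqrt hsin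
  have habs : |m / (2 * μ) * x| ≤ |m| / (2 * μ) := by
    rw [abs_mul, abs_div, abs_of_pos (by linarith : (0:ℝ) < 2 * μ)]
    have : |x| ≤ 1 := abs_le.2 ⟨by linarith, hx1⟩
    have h2 : 0 ≤ |m| / (2 * μ) := div_nonneg (abs_nonneg _) (by linarith)
    nlinarith [abs_nonneg (m / (2 * μ))]
  have hfac : (1:ℝ) ≤ Real.sqrt 2 * Real.exp (|m| / (2 * μ)) * Real.exp (m / (2 * μ) * x) := by
    have h1 : (1:ℝ) ≤ Real.sqrt 2 := Real.one_le_sqrt.2 one_le_two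
    have h2 : (1:ℝ) ≤ Real.exp (|m| / (2 * μ)) * Real.exp (m / (2 * μ) * x) := by
      rw [← Real.exp_add, ← Real.exp_zero]
      apply Real.exp_le_exp.2
      have := neg_abs_le (m / (2 * μ) * x)
      linarith [abs_le.1 habs]
    nlinarith [Real.exp_pos (|m| / (2 * μ)), Real.exp_pos (m / (2 * μ) * x)]
  calc Real.sqrt (min x (1 - x)) ≤ barS x := hSx
    _ = 1 * barS x := (one_mul _).symm
    _ ≤ Real.sqrt 2 * Real.exp (|m| / (2 * μ)) * Real.exp (m / (2 * μ) * x) * barS x :=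
        mul_le_mul_of_nonneg_right hfac (Real.sqrt_nonneg _)
    _ = Real.sqrt 2 * Real.exp (|m| / (2 * μ)) * barφ (m / (2 * μ)) x := by
        rw [barφ]; ring

lemma barφ_le (μ m : ℝ) (hμ : 0 < μ) {x : ℝ} (hx : x ∈ Set.Icc (0:ℝ) 1) :
    barφ (m / (2 * μ)) x ≤ Real.exp (|m| / (2 * μ)) := by
  have habs : |m / (2 * μ) * x| ≤ |m| / (2 * μ) := by
    rw [abs_mul, abs_div, abs_of_pos (by linarith : (0:ℝ) < 2 * μ)]
    have : |x| ≤ 1 := abs_le.2 ⟨by linarith [hx.1], hx.2⟩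
    have h2 : 0 ≤ |m| / (2 * μ) := div_nonneg (abs_nonneg _) (by linarith)
    nlinarith [abs_nonneg (m / (2 * μ))]
  have h1 : Real.exp (m / (2 * μ) * x) ≤ Real.exp (|m| / (2 * μ)) :=
    Real.exp_le_exp.2 (le_trans (le_abs_self _) habs)
  have h2 : barS x ≤ 1 := Real.sqrt_le_one.2 (Real.sin_le_one _)
  calc barφ (m / (2 * μ)) x = Real.exp (m / (2 * μ) * x) * barS x := rfl
    _ ≤ Real.exp (|m| / (2 * μ)) * 1 :=
        mul_le_mul h1 h2 (Real.sqrt_nonneg _) (Real.exp_pos _).le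
    _ = Real.exp (|m| / (2 * μ)) := mul_one _

theorem transport_Linfty_decay
    (μ m n : ℝ) (hμ : 0 < μ) (hmn : 0 ≤ m ^ 2 / (4 * μ) + n)
    (w wt wx wxx : ℝ → ℝ → ℝ)
    (hwcont : ContinuousOn (fun p : ℝ × ℝ => w p.1 p.2) (Set.Icc 0 1 ×ˢ Set.Ici 0))
    (hwt : ∀ x ∈ Set.Ioo (0:ℝ) 1, ∀ t ∈ Set.Ioi (0:ℝ), HasDerivAt (fun τ => w x τ) (wt x t) t)
    (hwx : ∀ x ∈ Set.Ioo (0:ℝ) 1, ∀ t ∈ Set.Ioi (0:ℝ), HasDerivAt (fun y => w y t) (wx x t) x)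
    (hwxx : ∀ x ∈ Set.Ioo (0:ℝ) 1, ∀ t ∈ Set.Ioi (0:ℝ), HasDerivAt (fun y => wx y t) (wxx x t) x)
    (hwtc : ContinuousOn (fun p : ℝ × ℝ => wt p.1 p.2) (Set.Ioo 0 1 ×ˢ Set.Ioi 0))
    (hwxc : ContinuousOn (fun p : ℝ × ℝ => wx p.1 p.2) (Set.Ioo 0 1 ×ˢ Set.Ioi 0))
    (hwxxc : ContinuousOn (fun p : ℝ × ℝ => wxx p.1 p.2) (Set.Ioo 0 1 ×ˢ Set.Ioi 0))
    (hwpde : ∀ x ∈ Set.Ioo (0:ℝ) 1, ∀ t ∈ Set.Ioi (0:ℝ), wt x t - μ * wxx x t + m * wx x t + n * w x t = 0)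
    (u₀ u₀' : ℝ → ℝ)
    (hu₀c1 : ∀ x ∈ Set.Icc (0:ℝ) 1, HasDerivWithinAt u₀ (u₀' x) (Set.Icc 0 1) x)
    (hu₀dc : ContinuousOn u₀' (Set.Icc 0 1))
    (hu₀0 : u₀ 0 = 0) (hu₀1 : u₀ 1 = 0)
    (hbc : ∀ t : ℝ, 0 ≤ t → w 0 t = 0 ∧ w 1 t = 0)
    (hic : ∀ x ∈ Set.Icc (0:ℝ) 1, w x 0 = u₀ x) :
    ∀ t : ℝ, 0 < t → ∀ x ∈ Set.Icc (0:ℝ) 1,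
      |w x t| ≤ Real.exp (|m| / μ) * Real.sqrt (2 + m ^ 2 / (2 * μ ^ 2))
        * Real.sqrt ((∫ x in (0:ℝ)..1, (u₀ x) ^ 2) + ∫ x in (0:ℝ)..1, (u₀' x) ^ 2)
        * Real.exp (-(m ^ 2 / (4 * μ) + n + 2 * μ) * t) := by
  intro t ht x hx
  set C : ℝ := Real.sqrt ((∫ x in (0:ℝ)..1, (u₀ x) ^ 2) + ∫ x in (0:ℝ)..1, (u₀' x) ^ 2) with hCdef
  have hCnn : 0 ≤ C := Real.sqrt_nonneg _
  have habs : ∀ y ∈ Set.Icc (0:ℝ) 1, |u₀ y| ≤ Real.sqrt (min y (1 - y)) * C :=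
    aux_init_bound u₀ u₀' hu₀c1 hu₀dc hu₀0 hu₀1
  have key : ∀ ε : ℝ, 0 < ε → |w x t| ≤ Real.exp (|m| / μ) * Real.sqrt (2 + m ^ 2 / (2 * μ ^ 2))
      * (C + ε) * Real.exp (-(m ^ 2 / (4 * μ) + n + 2 * μ) * t) := by
    intro ε hε
    set K : ℝ := (C + ε) * (Real.sqrt 2 * Real.exp (|m| / (2 * μ))) with hKdef
    have hKpos : 0 < K :=
      mul_pos (by linarith) (mul_pos (Real.sqrt_pos.2 two_pos) (Real.exp_pos _))
    have hubd : ∀ y ∈ Set.Icc (0:ℝ) 1, |u₀ y| ≤ K * barφ (m / (2 * μ)) y := by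
      intro y hy
      calc |u₀ y| ≤ Real.sqrt (min y (1 - y)) * C := habs y hy
        _ ≤ (Real.sqrt 2 * Real.exp (|m| / (2 * μ)) * barφ (m / (2 * μ)) y) * (C + ε) :=
            mul_le_mul (aux_min_le_barφ μ m hμ hy) (by linarith) hCnn
              (mul_nonneg (mul_nonneg (Real.sqrt_nonneg _) (Real.exp_pos _).le)
                (barφ_nonneg _ _))
        _ = K * barφ (m / (2 * μ)) y := by rw [hKdef]; ring
    have hinit1 : ∀ y ∈ Set.Icc (0:ℝ) 1, w y 0 ≤ K * barφ (m / (2 * μ)) y := by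
      intro y hy
      rw [hic y hy]
      exact le_trans (le_abs_self _) (hubd y hy)
    have hup := core μ m n K hμ hKpos w wt wx wxx hwcont hwt hwx hwxx hwpde hbc hinit1 t ht x hx
    have hinit2 : ∀ y ∈ Set.Icc (0:ℝ) 1,
        (fun a b => -(w a b)) y 0 ≤ K * barφ (m / (2 * μ)) y := by
      intro y hy
      simp only
      rw [hic y hy]
      exact le_trans (neg_le_abs _) (hubd y hy)
    have hdn := core μ m n K hμ hKpos (fun a b => -(w a b)) (fun a b => -(wt a b))
      (fun a b => -(wx a b)) (fun a b => -(wxx a b))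
      (hwcont.neg)
      (fun x hx t ht => (hwt x hx t ht).neg)
      (fun x hx t ht => (hwx x hx t ht).neg)
      (fun x hx t ht => (hwxx x hx t ht).neg)
      (fun x hx t ht => by have := hwpde x hx t ht; linarith)
      (fun t ht => ⟨by simp [(hbc t ht).1], by simp [(hbc t ht).2]⟩)
      hinit2 t ht x hx
    have hwabs : |w x t| ≤ K * barφ (m / (2 * μ)) x
        * Real.exp (-(m ^ 2 / (4 * μ) + n + 2 * μ) * t) :=
      abs_le.2 ⟨by linarith, hup⟩
    have hφle := barφ_le μ m hμ hx
    have hee : Real.exp (|m| / (2 * μ)) * Real.exp (|m| / (2 * μ)) = Real.exp (|m| / μ) := by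
      rw [← Real.exp_add]
      congr 1
      field_simp
      ring
    have hsq2 : Real.sqrt 2 ≤ Real.sqrt (2 + m ^ 2 / (2 * μ ^ 2)) :=
      Real.sqrt_le_sqrt (by simp only [le_add_iff_nonneg_right]; positivity)
    have hE : (0:ℝ) < Real.exp (-(m ^ 2 / (4 * μ) + n + 2 * μ) * t) := Real.exp_pos _
    calc |w x t| ≤ K * barφ (m / (2 * μ)) x
          * Real.exp (-(m ^ 2 / (4 * μ) + n + 2 * μ) * t) := hwabs
      _ ≤ K * Real.exp (|m| / (2 * μ))
          * Real.exp (-(m ^ 2 / (4 * μ) + n + 2 * μ) * t) := by gcongr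
      _ = (C + ε) * Real.sqrt 2 * Real.exp (|m| / μ)
          * Real.exp (-(m ^ 2 / (4 * μ) + n + 2 * μ) * t) := by rw [hKdef, ← hee]; ring
      _ ≤ (C + ε) * Real.sqrt (2 + m ^ 2 / (2 * μ ^ 2)) * Real.exp (|m| / μ)
          * Real.exp (-(m ^ 2 / (4 * μ) + n + 2 * μ) * t) := by gcongr
      _ = Real.exp (|m| / μ) * Real.sqrt (2 + m ^ 2 / (2 * μ ^ 2)) * (C + ε)
          * Real.exp (-(m ^ 2 / (4 * μ) + n + 2 * μ) * t) := by ring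
  set B : ℝ := Real.exp (|m| / μ) * Real.sqrt (2 + m ^ 2 / (2 * μ ^ 2))
    * Real.exp (-(m ^ 2 / (4 * μ) + n + 2 * μ) * t) with hBdef
  have hBpos : 0 < B := by
    rw [hBdef]
    have h2 : (0:ℝ) < Real.sqrt (2 + m ^ 2 / (2 * μ ^ 2)) :=
      Real.sqrt_pos.2 (by positivity)
    positivity
  have hgoal : |w x t| ≤ B * C := by
    refine le_of_forall_gt_imp_ge_of_dense ?_
    intro y hy
    have hδ : 0 < (y - B * C) / B := div_pos (by linarith) hBpos
    have := key ((y - B * C) / B) hδ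
    have heq : Real.exp (|m| / μ) * Real.sqrt (2 + m ^ 2 / (2 * μ ^ 2))
        * (C + (y - B * C) / B) * Real.exp (-(m ^ 2 / (4 * μ) + n + 2 * μ) * t)
        = B * C + B * ((y - B * C) / B) := by rw [hBdef]; ring
    rw [heq] at this
    rw [mul_div_cancel₀ _ hBpos.ne'] at this
    linarith
  calc |w x t| ≤ B * C := hgoal
    _ = Real.exp (|m| / μ) * Real.sqrt (2 + m ^ 2 / (2 * μ ^ 2)) * C
        * Real.exp (-(m ^ 2 / (4 * μ) + n + 2 * μ) * t) := by rw [hBdef]; ring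
end

section
/- (Theorem 9) Let μ > 0 and m, n ∈ ℝ with m²/(4μ) + n ≥ 0, let f : [0,1] × [0,∞) → ℝ be continuous and d : [0,∞) → ℝ be continuous with d(0) = 0, and let v : [0,1] × [0,∞) → ℝ be a classical solution of v_t − μ v_xx + m v_x + n v = f(x,t) on (0,1) × (0,∞) with boundary conditions v(0,t) = 0, v(1,t) = d(t) for all t ≥ 0 and zero initial condition v(x,0) = 0. Then for every t > 0 and every p > 2, max over (x,s) ∈ [0,1] × [0,t] of |v(x,s)| is at most e^{|m|/μ} · ( max_{s∈[0,t]} |d(s)| + (1/μ) · 2^{(5p−8)/(2p−4)} · max_{(x,s)∈[0,1]×[0,t]} |f(x,s)| ). -/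
open Real MeasureTheory intervalIntegral Set

/-- Second derivative test: at an interior local maximum, the second derivative
is nonpositive. -/
lemma second_deriv_nonpos_of_isLocalMax {g g' : ℝ → ℝ} {a b x₀ L : ℝ}
    (hx₀ : x₀ ∈ Set.Ioo a b)
    (hg : ∀ y ∈ Set.Ioo a b, HasDerivAt g (g' y) y)
    (hmax : IsLocalMax g x₀)
    (hL : HasDerivAt g' L x₀) : L ≤ 0 := by
  by_contra hL0
  push_neg at hL0
  have hgx0 : g' x₀ = 0 := hmax.hasDerivAt_eq_zero (hg x₀ hx₀)
  have hslope : Filter.Tendsto (slope g' x₀) (nhdsWithin x₀ {x₀}ᶜ) (nhds L) :=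
    hasDerivAt_iff_tendsto_slope.mp hL
  have hslope' : Filter.Tendsto (slope g' x₀) (nhdsWithin x₀ (Set.Ioi x₀)) (nhds L) :=
    hslope.mono_left (nhdsWithin_mono _ (fun y hy => ne_of_gt hy))
  have h1 : ∀ᶠ y in nhdsWithin x₀ (Set.Ioi x₀), 0 < slope g' x₀ y :=
    hslope'.eventually (eventually_gt_nhds hL0)
  have h2 : ∀ᶠ y in nhdsWithin x₀ (Set.Ioi x₀), g y ≤ g x₀ :=
    hmax.filter_mono nhdsWithin_le_nhds
  have h3 : ∀ᶠ y in nhdsWithin x₀ (Set.Ioi x₀), y < b :=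
    Filter.Eventually.filter_mono nhdsWithin_le_nhds (eventually_lt_nhds hx₀.2)
  have hall := (h1.and (h2.and h3))
  rcases mem_nhdsGT_iff_exists_Ioo_subset.mp hall with ⟨u, hu, hsub⟩
  have hux : x₀ < u := hu
  set x₁ : ℝ := (x₀ + u) / 2 with hx₁def
  have hx₁ : x₁ ∈ Set.Ioo x₀ u := by constructor <;> (simp only [hx₁def]; linarith)
  obtain ⟨h1', h2', h3'⟩ := hsub hx₁
  have hsubIcc : Set.Icc x₀ x₁ ⊆ Set.Ioo a b := fun y hy =>
    ⟨lt_of_lt_of_le hx₀.1 hy.1, lt_of_le_of_lt hy.2 h3'⟩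
  have hcont : ContinuousOn g (Set.Icc x₀ x₁) := fun y hy =>
    ((hg y (hsubIcc hy)).continuousAt).continuousWithinAt
  obtain ⟨ξ, hξ, hslopeξ⟩ := exists_hasDerivAt_eq_slope g g' hx₁.1 hcont
    (fun y hy => hg y (hsubIcc ⟨le_of_lt hy.1, le_of_lt hy.2⟩))
  have hgξ : g' ξ ≤ 0 := by
    rw [hslopeξ]
    apply div_nonpos_of_nonpos_of_nonneg
    · linarith
    · linarith [hξ.1, hξ.2]
  have hξmem : ξ ∈ Set.Ioo x₀ u := ⟨hξ.1, lt_trans hξ.2 hx₁.2⟩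
  have hpos := (hsub hξmem).1
  rw [slope_def_field, hgx0] at hpos
  have hden : 0 < ξ - x₀ := by linarith [hξ.1]
  have : 0 < g' ξ := by
    have := mul_pos hpos hden
    have hne : ξ - x₀ ≠ 0 := ne_of_gt hden
    field_simp at this
    linarith [this]
  linarith

/-- At a right-endpoint maximum, the (two-sided) derivative is nonnegative. -/
lemma deriv_nonneg_of_isMaxOn_right {h : ℝ → ℝ} {T L : ℝ} (hT : 0 < T)
    (hmax : ∀ τ ∈ Set.Icc (0:ℝ) T, h τ ≤ h T) (hd : HasDerivAt h L T) : 0 ≤ L := by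
  have hs : Filter.Tendsto (slope h T) (nhdsWithin T (Set.Iio T)) (nhds L) :=
    (hasDerivAt_iff_tendsto_slope.mp hd).mono_left
      (nhdsWithin_mono _ (fun y hy => ne_of_lt hy))
  refine ge_of_tendsto hs ?_
  have h0 : ∀ᶠ τ in nhdsWithin T (Set.Iio T), 0 < τ :=
    Filter.Eventually.filter_mono nhdsWithin_le_nhds (eventually_gt_nhds hT)
  have h1 : ∀ᶠ τ in nhdsWithin T (Set.Iio T), τ < T :=
    eventually_mem_nhdsWithin
  filter_upwards [h0, h1] with τ hτ0 hτT
  rw [slope_def_field]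
  rw [div_nonneg_iff]
  right
  constructor
  · have := hmax τ ⟨le_of_lt hτ0, le_of_lt hτT⟩
    linarith
  · linarith

set_option maxHeartbeats 1000000 in
/-- Weak maximum principle for `u_t - μ u_xx + c u ≤ 0` with `c ≥ 0`. -/
lemma maxprin {μ c T : ℝ} (hμ : 0 < μ) (hc : 0 ≤ c) (hT : 0 < T)
    {u ut ux uxx : ℝ → ℝ → ℝ}
    (hcont : ContinuousOn (fun p : ℝ × ℝ => u p.1 p.2) (Set.Icc 0 1 ×ˢ Set.Icc 0 T))
    (hut : ∀ x ∈ Set.Ioo (0:ℝ) 1, ∀ t ∈ Set.Ioc (0:ℝ) T, HasDerivAt (fun τ => u x τ) (ut x t) t)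
    (hux : ∀ x ∈ Set.Ioo (0:ℝ) 1, ∀ t ∈ Set.Ioc (0:ℝ) T, HasDerivAt (fun y => u y t) (ux x t) x)
    (huxx : ∀ x ∈ Set.Ioo (0:ℝ) 1, ∀ t ∈ Set.Ioc (0:ℝ) T, HasDerivAt (fun y => ux y t) (uxx x t) x)
    (hpde : ∀ x ∈ Set.Ioo (0:ℝ) 1, ∀ t ∈ Set.Ioc (0:ℝ) T, ut x t - μ * uxx x t + c * u x t ≤ 0)
    (hb0 : ∀ t ∈ Set.Icc (0:ℝ) T, u 0 t ≤ 0)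
    (hb1 : ∀ t ∈ Set.Icc (0:ℝ) T, u 1 t ≤ 0)
    (hi : ∀ x ∈ Set.Icc (0:ℝ) 1, u x 0 ≤ 0) :
    ∀ x ∈ Set.Icc (0:ℝ) 1, ∀ t ∈ Set.Icc (0:ℝ) T, u x t ≤ 0 := by
  have key : ∀ ε : ℝ, 0 < ε → ∀ x ∈ Set.Icc (0:ℝ) 1, ∀ t ∈ Set.Icc (0:ℝ) T,
      u x t - ε * (t + 1) < 0 := by
    intro ε hε
    set K : Set (ℝ × ℝ) := Set.Icc (0:ℝ) 1 ×ˢ Set.Icc (0:ℝ) T with hK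
    have hKcomp : IsCompact K := (isCompact_Icc).prod (isCompact_Icc)
    have hKne : K.Nonempty := ⟨(0, 0), by
      constructor <;> constructor <;> norm_num [hT.le]⟩
    have hFcont : ContinuousOn (fun p : ℝ × ℝ => u p.1 p.2 - ε * (p.2 + 1)) K :=
      hcont.sub ((continuous_const.mul (continuous_snd.add continuous_const)).continuousOn)
    obtain ⟨⟨x₀, t₀⟩, hmem, hmax⟩ := hKcomp.exists_isMaxOn hKne hFcont
    have hmax' : ∀ q ∈ K, u q.1 q.2 - ε * (q.2 + 1) ≤ u x₀ t₀ - ε * (t₀ + 1) :=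
      fun q hq => hmax hq
    suffices hneg : u x₀ t₀ - ε * (t₀ + 1) < 0 by
      intro x hx t ht
      exact lt_of_le_of_lt (hmax' (x, t) ⟨hx, ht⟩) hneg
    by_contra hpos
    push_neg at hpos
    have hx₀mem : x₀ ∈ Set.Icc (0:ℝ) 1 := hmem.1
    have ht₀mem : t₀ ∈ Set.Icc (0:ℝ) T := hmem.2
    have hu0 : 0 < u x₀ t₀ := by nlinarith [ht₀mem.1]
    have hx₀0 : x₀ ≠ 0 := by
      intro h; rw [h] at hu0; linarith [hb0 t₀ ht₀mem]
    have hx₀1 : x₀ ≠ 1 := by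
      intro h; rw [h] at hu0; linarith [hb1 t₀ ht₀mem]
    have ht₀0 : t₀ ≠ 0 := by
      intro h; rw [h] at hu0; linarith [hi x₀ hx₀mem]
    have hx₀Ioo : x₀ ∈ Set.Ioo (0:ℝ) 1 :=
      ⟨lt_of_le_of_ne hx₀mem.1 (Ne.symm hx₀0), lt_of_le_of_ne hx₀mem.2 hx₀1⟩
    have ht₀Ioc : t₀ ∈ Set.Ioc (0:ℝ) T :=
      ⟨lt_of_le_of_ne ht₀mem.1 (Ne.symm ht₀0), ht₀mem.2⟩
    -- time direction
    have hder_t : HasDerivAt (fun τ => u x₀ τ - ε * (τ + 1)) (ut x₀ t₀ - ε) t₀ := by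
      have h1 := hut x₀ hx₀Ioo t₀ ht₀Ioc
      have h2 : HasDerivAt (fun τ : ℝ => ε * (τ + 1)) ε t₀ := by
        simpa using ((hasDerivAt_id t₀).add_const 1).const_mul ε
      exact h1.sub h2
    have hmax_t : ∀ τ ∈ Set.Icc (0:ℝ) T, u x₀ τ - ε * (τ + 1) ≤ u x₀ t₀ - ε * (t₀ + 1) :=
      fun τ hτ => hmax' (x₀, τ) ⟨hx₀mem, hτ⟩
    have hut_ge : ε ≤ ut x₀ t₀ := by
      rcases eq_or_lt_of_le ht₀Ioc.2 with hTeq | hTlt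
      · subst hTeq
        have := deriv_nonneg_of_isMaxOn_right
          (h := fun τ => u x₀ τ - ε * (τ + 1)) hT hmax_t hder_t
        linarith
      · have hmo : IsMaxOn (fun τ => u x₀ τ - ε * (τ + 1)) (Set.Icc 0 T) t₀ :=
          isMaxOn_iff.mpr hmax_t
        have hloc : IsLocalMax (fun τ => u x₀ τ - ε * (τ + 1)) t₀ :=
          hmo.isLocalMax (Icc_mem_nhds ht₀Ioc.1 hTlt)
        have := hloc.hasDerivAt_eq_zero hder_t
        linarith
    -- space direction
    have hmo_x : IsMaxOn (fun y => u y t₀ - ε * (t₀ + 1)) (Set.Icc 0 1) x₀ :=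
      isMaxOn_iff.mpr fun y hy => hmax' (y, t₀) ⟨hy, ht₀mem⟩
    have hloc_x : IsLocalMax (fun y => u y t₀ - ε * (t₀ + 1)) x₀ :=
      hmo_x.isLocalMax (Icc_mem_nhds hx₀Ioo.1 hx₀Ioo.2)
    have huxx_le : uxx x₀ t₀ ≤ 0 := by
      refine second_deriv_nonpos_of_isLocalMax (g := fun y => u y t₀ - ε * (t₀ + 1))
        (g' := fun y => ux y t₀) hx₀Ioo ?_ hloc_x (huxx x₀ hx₀Ioo t₀ ht₀Ioc)
      intro y hy
      exact (hux y hy t₀ ht₀Ioc).sub_const _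
    have hpde' := hpde x₀ hx₀Ioo t₀ ht₀Ioc
    nlinarith [mul_nonneg hc hu0.le, mul_nonpos_of_nonneg_of_nonpos hμ.le huxx_le]
  intro x hx t ht
  by_contra h0
  push_neg at h0
  have hTpos : (0:ℝ) < T + 1 := by linarith
  have := key (u x t / (2 * (T + 1))) (by positivity) x hx t ht
  have htle : t + 1 ≤ T + 1 := by linarith [ht.2]
  have hq : u x t / (2 * (T + 1)) * (t + 1) ≤ u x t / 2 := by
    rw [div_mul_eq_mul_div, div_le_div_iff₀ (by positivity) (by norm_num)]
    nlinarith
  linarith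

set_option maxHeartbeats 1000000 in
theorem transport_boundary_maximum_estimate
    (μ m n : ℝ) (hμ : 0 < μ) (hmn : 0 ≤ m ^ 2 / (4 * μ) + n)
    (f : ℝ → ℝ → ℝ)
    (hf : ContinuousOn (fun p : ℝ × ℝ => f p.1 p.2) (Set.Icc 0 1 ×ˢ Set.Ici 0))
    (d : ℝ → ℝ)
    (hd : ContinuousOn d (Set.Ici 0))
    (hd0 : d 0 = 0)
    (v vt vx vxx : ℝ → ℝ → ℝ)
    (hvcont : ContinuousOn (fun p : ℝ × ℝ => v p.1 p.2) (Set.Icc 0 1 ×ˢ Set.Ici 0))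
    (hvt : ∀ x ∈ Set.Ioo (0:ℝ) 1, ∀ t ∈ Set.Ioi (0:ℝ), HasDerivAt (fun τ => v x τ) (vt x t) t)
    (hvx : ∀ x ∈ Set.Ioo (0:ℝ) 1, ∀ t ∈ Set.Ioi (0:ℝ), HasDerivAt (fun y => v y t) (vx x t) x)
    (hvxx : ∀ x ∈ Set.Ioo (0:ℝ) 1, ∀ t ∈ Set.Ioi (0:ℝ), HasDerivAt (fun y => vx y t) (vxx x t) x)
    (hvtc : ContinuousOn (fun p : ℝ × ℝ => vt p.1 p.2) (Set.Ioo 0 1 ×ˢ Set.Ioi 0))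
    (hvxc : ContinuousOn (fun p : ℝ × ℝ => vx p.1 p.2) (Set.Ioo 0 1 ×ˢ Set.Ioi 0))
    (hvxxc : ContinuousOn (fun p : ℝ × ℝ => vxx p.1 p.2) (Set.Ioo 0 1 ×ˢ Set.Ioi 0))
    (hvpde : ∀ x ∈ Set.Ioo (0:ℝ) 1, ∀ t ∈ Set.Ioi (0:ℝ), vt x t - μ * vxx x t + m * vx x t + n * v x t = f x t)
    (hbc : ∀ t : ℝ, 0 ≤ t → v 0 t = 0 ∧ v 1 t = d t)
    (hic : ∀ x ∈ Set.Icc (0:ℝ) 1, v x 0 = 0) :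
    ∀ t : ℝ, 0 < t → ∀ p : ℝ, 2 < p →
      ∀ x ∈ Set.Icc (0:ℝ) 1, ∀ s ∈ Set.Icc (0:ℝ) t,
        |v x s| ≤ Real.exp (|m| / μ) * (sSup ((fun s => |d s|) '' Set.Icc 0 t)
          + (1 / μ) * (2:ℝ) ^ ((5 * p - 8) / (2 * p - 4)) * sSup ((fun p : ℝ × ℝ => |f p.1 p.2|) '' (Set.Icc (0:ℝ) 1 ×ˢ Set.Icc (0:ℝ) t))) := by
  intro T hT p hp x hx s hs
  set α : ℝ := m / (2 * μ) with hαdef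
  have h2a : 2 * μ * α = m := by rw [hαdef]; field_simp [hμ.ne']
  set c : ℝ := n + m ^ 2 / (4 * μ) with hcdef
  have hcα : c = n + μ * α ^ 2 := by
    rw [hcdef, hαdef]; field_simp; ring
  have hc : 0 ≤ c := by rw [hcdef]; linarith
  -- sups
  set D : ℝ := sSup ((fun s => |d s|) '' Set.Icc 0 T) with hDdef
  set F : ℝ := sSup ((fun p : ℝ × ℝ => |f p.1 p.2|) '' (Set.Icc (0:ℝ) 1 ×ˢ Set.Icc (0:ℝ) T)) with hFdef
  have hdcont : ContinuousOn (fun s => |d s|) (Set.Icc 0 T) :=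
    (hd.mono (Set.Icc_subset_Ici_self)).abs
  have hDbdd : BddAbove ((fun s => |d s|) '' Set.Icc 0 T) :=
    (isCompact_Icc.image_of_continuousOn hdcont).bddAbove
  have hDle : ∀ τ ∈ Set.Icc (0:ℝ) T, |d τ| ≤ D :=
    fun τ hτ => le_csSup hDbdd (Set.mem_image_of_mem _ hτ)
  have hD0 : 0 ≤ D := le_trans (abs_nonneg (d 0)) (hDle 0 ⟨le_refl 0, hT.le⟩)
  have hKsub : Set.Icc (0:ℝ) 1 ×ˢ Set.Icc (0:ℝ) T ⊆ Set.Icc (0:ℝ) 1 ×ˢ Set.Ici (0:ℝ) :=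
    Set.prod_mono subset_rfl Set.Icc_subset_Ici_self
  have hfcont : ContinuousOn (fun p : ℝ × ℝ => |f p.1 p.2|) (Set.Icc (0:ℝ) 1 ×ˢ Set.Icc (0:ℝ) T) :=
    (hf.mono hKsub).abs
  have hFbdd : BddAbove ((fun p : ℝ × ℝ => |f p.1 p.2|) '' (Set.Icc (0:ℝ) 1 ×ˢ Set.Icc (0:ℝ) T)) :=
    ((isCompact_Icc.prod isCompact_Icc).image_of_continuousOn hfcont).bddAbove
  have hFle : ∀ y ∈ Set.Icc (0:ℝ) 1, ∀ τ ∈ Set.Icc (0:ℝ) T, |f y τ| ≤ F :=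
    fun y hy τ hτ => le_csSup hFbdd (Set.mem_image_of_mem _ (Set.mk_mem_prod hy hτ))
  have hF0 : 0 ≤ F := le_trans (abs_nonneg _)
    (hFle 0 ⟨le_refl 0, by norm_num⟩ 0 ⟨le_refl 0, hT.le⟩)
  set A : ℝ := Real.exp |α| * D with hAdef
  set B : ℝ := Real.exp |α| * F with hBdef
  have hA0 : 0 ≤ A := mul_nonneg (Real.exp_pos _).le hD0
  have hB0 : 0 ≤ B := mul_nonneg (Real.exp_pos _).le hF0
  have hexp_bound : ∀ y ∈ Set.Icc (0:ℝ) 1, Real.exp (-(α * y)) ≤ Real.exp |α| := by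
    intro y hy
    apply Real.exp_le_exp.mpr
    calc -(α * y) ≤ |α * y| := neg_le_abs _
      _ = |α| * |y| := abs_mul _ _
      _ ≤ |α| * 1 := by
          apply mul_le_mul_of_nonneg_left _ (abs_nonneg α)
          rw [abs_le]; exact ⟨by linarith [hy.1], hy.2⟩
      _ = |α| := mul_one _
  have hexp_bound' : ∀ y ∈ Set.Icc (0:ℝ) 1, Real.exp (α * y) ≤ Real.exp |α| := by
    intro y hy
    apply Real.exp_le_exp.mpr
    calc α * y ≤ |α * y| := le_abs_self _
      _ = |α| * |y| := abs_mul _ _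
      _ ≤ |α| * 1 := by
          apply mul_le_mul_of_nonneg_left _ (abs_nonneg α)
          rw [abs_le]; exact ⟨by linarith [hy.1], hy.2⟩
      _ = |α| := mul_one _
  -- the key estimate: for σ = ±1, σ * w - Φ ≤ 0
  have key : ∀ σ : ℝ, |σ| = 1 → ∀ y ∈ Set.Icc (0:ℝ) 1, ∀ τ ∈ Set.Icc (0:ℝ) T,
      σ * (Real.exp (-(α * y)) * v y τ) - (A + B * (1 - y ^ 2) / (2 * μ)) ≤ 0 := by
    intro σ hσ
    have hEderiv : ∀ y : ℝ, HasDerivAt (fun z : ℝ => Real.exp (-(α * z)))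
        (Real.exp (-(α * y)) * (-α)) y := by
      intro y
      have h1 : HasDerivAt (fun z : ℝ => -(α * z)) (-α) y := by
        simpa [Pi.neg_def] using ((hasDerivAt_id y).const_mul α).neg
      exact h1.exp
    refine maxprin (μ := μ) (c := c) (T := T) hμ hc hT
      (u := fun y τ => σ * (Real.exp (-(α * y)) * v y τ) - (A + B * (1 - y ^ 2) / (2 * μ)))
      (ut := fun y τ => σ * (Real.exp (-(α * y)) * vt y τ))
      (ux := fun y τ => σ * (Real.exp (-(α * y)) * (vx y τ - α * v y τ)) + B * y / μ)
      (uxx := fun y τ => σ * (Real.exp (-(α * y)) * (vxx y τ - 2 * α * vx y τ + α ^ 2 * v y τ)) + B / μ)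
      ?_ ?_ ?_ ?_ ?_ ?_ ?_ ?_
    · -- continuity
      have hE : Continuous fun q : ℝ × ℝ => Real.exp (-(α * q.1)) := by fun_prop
      exact ((hE.continuousOn.mul (hvcont.mono hKsub)).const_smul σ |>.congr
        (fun q hq => by simp [smul_eq_mul])).sub (by fun_prop)
    · -- t-derivative
      intro y hy τ hτ
      have h1 : HasDerivAt (fun τ => σ * (Real.exp (-(α * y)) * v y τ))
          (σ * (Real.exp (-(α * y)) * vt y τ)) τ := by
        simpa [mul_assoc] using (hvt y hy τ hτ.1).const_mul (σ * Real.exp (-(α * y)))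
      exact h1.sub_const _
    · -- x-derivative
      intro y hy τ hτ
      have h1 : HasDerivAt (fun z => Real.exp (-(α * z)) * v z τ)
          (Real.exp (-(α * y)) * (-α) * v y τ + Real.exp (-(α * y)) * vx y τ) y :=
        (hEderiv y).mul (hvx y hy τ hτ.1)
      have h2 : HasDerivAt (fun z : ℝ => A + B * (1 - z ^ 2) / (2 * μ))
          (-(B * y / μ)) y := by
        have h3 : HasDerivAt (fun z : ℝ => 1 - z ^ 2) (-(2 * y)) y := by
          simpa using (hasDerivAt_pow 2 y).const_sub 1
        have h4 := ((h3.const_mul B).div_const (2 * μ)).const_add A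
        refine h4.congr_deriv ?_
        field_simp
      have h5 := (h1.const_mul σ).sub h2
      refine h5.congr_deriv ?_
      ring
    · -- second x-derivative
      intro y hy τ hτ
      have h1 : HasDerivAt (fun z => Real.exp (-(α * z)) * (vx z τ - α * v z τ))
          (Real.exp (-(α * y)) * (-α) * (vx y τ - α * v y τ)
            + Real.exp (-(α * y)) * (vxx y τ - α * vx y τ)) y :=
        (hEderiv y).mul ((hvxx y hy τ hτ.1).sub ((hvx y hy τ hτ.1).const_mul α))
      have h2 : HasDerivAt (fun z : ℝ => B * z / μ) (B / μ) y := by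
        simpa [mul_div_assoc] using ((hasDerivAt_id y).const_mul B).div_const μ
      have h6 := (h1.const_mul σ).add h2
      refine h6.congr_deriv ?_
      ring
    · -- the differential inequality
      intro y hy τ hτ
      have hpde' := hvpde y hy τ hτ.1
      have hEq : σ * (Real.exp (-(α * y)) * vt y τ)
          - μ * (σ * (Real.exp (-(α * y)) * (vxx y τ - 2 * α * vx y τ + α ^ 2 * v y τ)) + B / μ)
          + c * (σ * (Real.exp (-(α * y)) * v y τ) - (A + B * (1 - y ^ 2) / (2 * μ)))
          = σ * Real.exp (-(α * y)) * f y τ - B - c * (A + B * (1 - y ^ 2) / (2 * μ)) := by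
      -- uses 2 μ α = m and c = n + μ α²
        have hμ1 : μ * (1 / μ) = 1 := by field_simp
        linear_combination (σ * Real.exp (-(α * y))) * hpde'
          + (σ * Real.exp (-(α * y)) * vx y τ) * h2a
          + (σ * Real.exp (-(α * y)) * v y τ) * hcα - B * hμ1
      rw [hEq]
      have hfb : σ * Real.exp (-(α * y)) * f y τ ≤ B := by
        calc σ * Real.exp (-(α * y)) * f y τ ≤ |σ * Real.exp (-(α * y)) * f y τ| := le_abs_self _
          _ = Real.exp (-(α * y)) * |f y τ| := by
              rw [abs_mul, abs_mul, hσ, abs_of_pos (Real.exp_pos _), one_mul]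
          _ ≤ Real.exp |α| * F := by
              apply mul_le_mul (hexp_bound y (Set.mem_Icc.mpr ⟨hy.1.le, hy.2.le⟩))
                (hFle y ⟨hy.1.le, hy.2.le⟩ τ ⟨hτ.1.le, hτ.2⟩) (abs_nonneg _) (Real.exp_pos _).le
          _ = B := hBdef.symm
      have hΦ : 0 ≤ A + B * (1 - y ^ 2) / (2 * μ) := by
        have h1 : 0 ≤ 1 - y ^ 2 := by nlinarith [hy.1, hy.2]
        positivity
      nlinarith [mul_nonneg hc hΦ]
    · -- boundary x = 0
      intro τ hτ
      show σ * (Real.exp (-(α * 0)) * v 0 τ) - (A + B * (1 - (0:ℝ) ^ 2) / (2 * μ)) ≤ 0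
      rw [(hbc τ hτ.1).1]
      have h1 : (0:ℝ) ≤ B * (1 - (0:ℝ) ^ 2) / (2 * μ) := by positivity
      simp only [mul_zero, neg_zero, Real.exp_zero]
      nlinarith
    · -- boundary x = 1
      intro τ hτ
      show σ * (Real.exp (-(α * 1)) * v 1 τ) - (A + B * (1 - (1:ℝ) ^ 2) / (2 * μ)) ≤ 0
      rw [(hbc τ hτ.1).2]
      have h1 : σ * (Real.exp (-(α * 1)) * d τ) ≤ A := by
        calc σ * (Real.exp (-(α * 1)) * d τ) ≤ |σ * (Real.exp (-(α * 1)) * d τ)| := le_abs_self _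
          _ = Real.exp (-(α * 1)) * |d τ| := by
              rw [abs_mul, abs_mul, hσ, abs_of_pos (Real.exp_pos _), one_mul]
          _ ≤ Real.exp |α| * D := by
              apply mul_le_mul (hexp_bound 1 (by norm_num)) (hDle τ hτ) (abs_nonneg _)
                (Real.exp_pos _).le
          _ = A := hAdef.symm
      have h2 : (0:ℝ) ≤ B * (1 - (1:ℝ) ^ 2) / (2 * μ) := by norm_num
      nlinarith
    · -- initial condition
      intro y hy
      show σ * (Real.exp (-(α * y)) * v y 0) - (A + B * (1 - y ^ 2) / (2 * μ)) ≤ 0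
      rw [hic y hy]
      have h1 : 0 ≤ 1 - y ^ 2 := by nlinarith [hy.1, hy.2]
      have : (0:ℝ) ≤ A + B * (1 - y ^ 2) / (2 * μ) := by positivity
      simp only [mul_zero]
      linarith
  -- apply with σ = 1 and σ = -1
  have hplus := key 1 (by norm_num) x hx s hs
  have hminus := key (-1) (by norm_num) x hx s hs
  have hwabs : |Real.exp (-(α * x)) * v x s| ≤ A + B * (1 - x ^ 2) / (2 * μ) := by
    rw [abs_le]; constructor <;> nlinarith [hplus, hminus]
  -- translate back to v
  have hvfromw : v x s = Real.exp (α * x) * (Real.exp (-(α * x)) * v x s) := by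
    rw [← mul_assoc, ← Real.exp_add]
    simp
  have hΦle : A + B * (1 - x ^ 2) / (2 * μ) ≤ A + B / (2 * μ) := by
    have h3 : B * (1 - x ^ 2) / (2 * μ) ≤ B / (2 * μ) := by
      gcongr
      nlinarith [hx.1, hx.2, hB0]
    linarith
  have hvb : |v x s| ≤ Real.exp |α| * (A + B / (2 * μ)) := by
    rw [hvfromw, abs_mul, abs_of_pos (Real.exp_pos _)]
    calc Real.exp (α * x) * |Real.exp (-(α * x)) * v x s|
        ≤ Real.exp |α| * (A + B * (1 - x ^ 2) / (2 * μ)) :=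
          mul_le_mul (hexp_bound' x hx) hwabs (abs_nonneg _) (Real.exp_pos _).le
      _ ≤ Real.exp |α| * (A + B / (2 * μ)) := by
          apply mul_le_mul_of_nonneg_left hΦle (Real.exp_pos _).le
  have hexp2 : Real.exp |α| * (A + B / (2 * μ)) = Real.exp (|m| / μ) * (D + F / (2 * μ)) := by
    have habs : |α| = |m| / (2 * μ) := by
      rw [hαdef, abs_div, abs_of_pos (by positivity : (0:ℝ) < 2 * μ)]
    have hsum : |α| + |α| = |m| / μ := by rw [habs]; field_simp; ring
    rw [hAdef, hBdef, ← hsum, Real.exp_add]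
    ring
  rw [hexp2] at hvb
  refine le_trans hvb ?_
  have hrp : (1:ℝ) ≤ (2:ℝ) ^ ((5 * p - 8) / (2 * p - 4)) := by
    rw [show (1:ℝ) = (2:ℝ) ^ (0:ℝ) by rw [Real.rpow_zero]]
    apply Real.rpow_le_rpow_of_exponent_le (by norm_num)
    apply div_nonneg <;> linarith
  have hFterm : F / (2 * μ) ≤ 1 / μ * (2:ℝ) ^ ((5 * p - 8) / (2 * p - 4)) * F := by
    have h1 : 1 / (2 * μ) ≤ 1 / μ * (2:ℝ) ^ ((5 * p - 8) / (2 * p - 4)) := by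
      calc 1 / (2 * μ) ≤ 1 / μ := by
            rw [div_le_div_iff₀ (by positivity) hμ]; linarith
        _ ≤ 1 / μ * (2:ℝ) ^ ((5 * p - 8) / (2 * p - 4)) := by
            nlinarith [hrp, (by positivity : (0:ℝ) < 1 / μ)]
    calc F / (2 * μ) = 1 / (2 * μ) * F := by ring
      _ ≤ 1 / μ * (2:ℝ) ^ ((5 * p - 8) / (2 * p - 4)) * F :=
          mul_le_mul_of_nonneg_right h1 hF0
  have := mul_le_mul_of_nonneg_left (add_le_add_left hFterm D) (Real.exp_pos (|m| / μ)).le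
  linarith
end

section
/- (Theorem 12) Let μ > 0 and ν > 0 be constants, let d : [0,∞) → ℝ be continuous with d(0) = 0, and let w : [0,1] × [0,∞) → ℝ be a classical solution of Burgers' equation w_t − μ w_xx + ν w w_x = 0 on (0,1) × (0,∞) with boundary conditions w(0,t) = 0, w(1,t) = d(t) for all t ≥ 0 and zero initial condition w(x,0) = 0. Then for every t > 0, max over (x,s) ∈ [0,1] × [0,t] of |w(x,s)| is at most max_{s∈[0,t]} |d(s)|; consequently (∫₀¹ w(x,t)² dx)^{1/2} ≤ max_{s∈[0,t]} |d(s)|. -/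
open Real MeasureTheory intervalIntegral Set

open Filter Topology


-- derivative at right endpoint of a max is nonneg
lemma deriv_nonneg_at_right_max {g : ℝ → ℝ} {a b g' : ℝ} (hab : a < b)
    (hd : HasDerivAt g g' b) (hmax : ∀ s ∈ Set.Ico a b, g s ≤ g b) : 0 ≤ g' := by
  have h1 : HasDerivWithinAt g g' (Set.Iio b) b := hd.hasDerivWithinAt
  rw [hasDerivWithinAt_iff_tendsto_slope] at h1
  have hss : Set.Iio b \ {b} = Set.Iio b :=
    Set.diff_singleton_eq_self (by simp)
  rw [hss] at h1
  refine ge_of_tendsto h1 ?_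
  filter_upwards [Ioo_mem_nhdsLT_of_mem ⟨hab, le_refl b⟩] with s hs
  have h2 : g s ≤ g b := hmax s ⟨le_of_lt hs.1, hs.2⟩
  have heq : slope g b s = (g b - g s) / (b - s) := by
    rw [slope_def_field, div_eq_div_iff (sub_ne_zero.2 (ne_of_lt hs.2))
      (sub_ne_zero.2 (ne_of_gt hs.2))]; ring
  rw [heq]
  exact div_nonneg (by linarith) (by linarith [hs.2])

-- second derivative nonpos at interior max
lemma second_deriv_nonpos_at_max {f f' : ℝ → ℝ} {a b x0 f'' : ℝ}
    (hx0 : x0 ∈ Set.Ioo a b)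
    (hdf : ∀ y ∈ Set.Ioo a b, HasDerivAt f (f' y) y)
    (h2 : HasDerivAt f' f'' x0)
    (hmax : ∀ y ∈ Set.Ioo a b, f y ≤ f x0) : f'' ≤ 0 := by
  have hloc : IsLocalMax f x0 := by
    filter_upwards [Ioo_mem_nhds hx0.1 hx0.2] with y hy using hmax y hy
  have hf'0 : f' x0 = 0 := hloc.hasDerivAt_eq_zero (hdf x0 hx0)
  by_contra h
  push_neg at h
  -- f'' > 0, so f' > 0 just to the right of x0
  have hslope : Tendsto (slope f' x0) (𝓝[≠] x0) (𝓝 f'') :=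
    hasDerivAt_iff_tendsto_slope.1 h2
  have hslope' : Tendsto (slope f' x0) (𝓝[>] x0) (𝓝 f'') :=
    hslope.mono_left (nhdsWithin_mono _ (fun y hy => ne_of_gt hy))
  have hpos : ∀ᶠ y in 𝓝[>] x0, 0 < slope f' x0 y :=
    hslope'.eventually_const_lt h
  have hIoo : Set.Ioo x0 b ∈ 𝓝[>] x0 := Ioo_mem_nhdsGT_of_mem ⟨le_refl _, hx0.2⟩
  obtain ⟨u, hu, hsub⟩ := mem_nhdsGT_iff_exists_Ioo_subset.1 (hpos.and hIoo)
  -- on Ioo x0 u, f' > 0 and y ∈ Ioo x0 b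
  set c := (x0 + min u b) / 2 with hc
  have hub : x0 < min u b := by
    rcases lt_or_ge u b with h' | h'
    · simpa [min_eq_left h'.le] using hu
    · simpa [min_eq_right h'] using hx0.2
  have hcmem : c ∈ Set.Ioo x0 (min u b) := ⟨by rw [hc]; linarith, by rw [hc]; linarith⟩
  have hfsub : Set.Icc x0 c ⊆ Set.Ioo a b := by
    intro y hy
    exact ⟨lt_of_lt_of_le hx0.1 hy.1, lt_of_le_of_lt hy.2 (hcmem.2.trans_le (min_le_right _ _))⟩
  have hmono : StrictMonoOn f (Set.Icc x0 c) := by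
    apply strictMonoOn_of_deriv_pos (convex_Icc _ _)
    · intro y hy
      exact ((hdf y (hfsub hy)).differentiableAt).continuousAt.continuousWithinAt
    · intro y hy
      rw [interior_Icc] at hy
      have hy' : y ∈ Set.Ioo x0 u :=
        ⟨hy.1, lt_of_lt_of_le (hy.2.trans hcmem.2) (min_le_left _ _)⟩
      have hsl := (hsub hy').1
      rw [slope_def_field, hf'0] at hsl
      have hyx : 0 < y - x0 := by linarith [hy.1]
      have hfy : 0 < f' y := by
        have h3 := mul_pos hsl hyx
        rw [div_mul_cancel₀] at h3
        · simpa using h3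
        · exact ne_of_gt hyx
      rwa [(hdf y (hfsub (Set.Ioo_subset_Icc_self hy))).deriv]
  have : f x0 < f c := hmono ⟨le_refl _, hcmem.1.le⟩ ⟨hcmem.1.le, le_refl _⟩ hcmem.1
  exact absurd (hmax c (hfsub ⟨hcmem.1.le, le_refl _⟩)) (not_le.2 this)

lemma parabolic_max_principle_s14 (μ : ℝ) (hμ : 0 < μ) (t : ℝ) (ht : 0 < t)
    (M : ℝ) (hM : 0 ≤ M)
    (w wt wx wxx : ℝ → ℝ → ℝ)
    (hwcont : ContinuousOn (fun p : ℝ × ℝ => w p.1 p.2) (Set.Icc 0 1 ×ˢ Set.Icc 0 t))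
    (hwt : ∀ x ∈ Set.Ioo (0:ℝ) 1, ∀ s ∈ Set.Ioc (0:ℝ) t, HasDerivAt (fun τ => w x τ) (wt x s) s)
    (hwx : ∀ x ∈ Set.Ioo (0:ℝ) 1, ∀ s ∈ Set.Ioc (0:ℝ) t, HasDerivAt (fun y => w y s) (wx x s) x)
    (hwxx : ∀ x ∈ Set.Ioo (0:ℝ) 1, ∀ s ∈ Set.Ioc (0:ℝ) t, HasDerivAt (fun y => wx y s) (wxx x s) x)
    (heq : ∀ x ∈ Set.Ioo (0:ℝ) 1, ∀ s ∈ Set.Ioc (0:ℝ) t, wx x s = 0 → wt x s = μ * wxx x s)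
    (hb0 : ∀ s ∈ Set.Icc (0:ℝ) t, w 0 s ≤ M)
    (hb1 : ∀ s ∈ Set.Icc (0:ℝ) t, w 1 s ≤ M)
    (hi : ∀ x ∈ Set.Icc (0:ℝ) 1, w x 0 ≤ M) :
    ∀ x ∈ Set.Icc (0:ℝ) 1, ∀ s ∈ Set.Icc (0:ℝ) t, w x s ≤ M := by
  by_contra hcon
  push_neg at hcon
  obtain ⟨x1, hx1, s1, hs1, hgt⟩ := hcon
  set ε : ℝ := (w x1 s1 - M) / (2 * t) with hε
  have hεpos : 0 < ε := div_pos (by linarith) (by linarith)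
  set K : Set (ℝ × ℝ) := Set.Icc 0 1 ×ˢ Set.Icc 0 t with hK
  have hKc : IsCompact K := (isCompact_Icc).prod isCompact_Icc
  have hKne : K.Nonempty := ⟨(x1, s1), hx1, hs1⟩
  set v : ℝ × ℝ → ℝ := fun p => w p.1 p.2 - ε * p.2 with hv
  have hvc : ContinuousOn v K := hwcont.sub ((continuous_const.mul continuous_snd).continuousOn)
  obtain ⟨p0, hp0K, hp0max⟩ := hKc.exists_isMaxOn hKne hvc
  obtain ⟨x0, s0⟩ := p0
  have hx0 : x0 ∈ Set.Icc (0:ℝ) 1 := hp0K.1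
  have hs0 : s0 ∈ Set.Icc (0:ℝ) t := hp0K.2
  have hvbig : M < v (x0, s0) := by
    have h1 : v (x1, s1) ≤ v (x0, s0) := hp0max ⟨hx1, hs1⟩
    have h2 : ε * s1 ≤ ε * t := by
      apply mul_le_mul_of_nonneg_left hs1.2 hεpos.le
    have h3 : ε * t = (w x1 s1 - M) / 2 := by
      rw [hε]; field_simp
    simp only [hv] at h1 ⊢
    nlinarith
  have hwv : ∀ x s, v (x, s) ≤ w x s - ε * s := fun x s => le_refl _
  -- interiority
  have hx0i : x0 ∈ Set.Ioo (0:ℝ) 1 := by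
    constructor
    · rcases lt_or_eq_of_le hx0.1 with h | h
      · exact h
      · exfalso
        have := hb0 s0 hs0
        have hεs : 0 ≤ ε * s0 := mul_nonneg hεpos.le hs0.1
        have : v (x0, s0) ≤ M := by simp only [hv, ← h]; linarith
        linarith
    · rcases lt_or_eq_of_le hx0.2 with h | h
      · exact h
      · exfalso
        have := hb1 s0 hs0
        have hεs : 0 ≤ ε * s0 := mul_nonneg hεpos.le hs0.1
        have : v (x0, s0) ≤ M := by simp only [hv, h]; linarith
        linarith
  have hs0i : s0 ∈ Set.Ioc (0:ℝ) t := by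
    refine ⟨?_, hs0.2⟩
    rcases lt_or_eq_of_le hs0.1 with h | h
    · exact h
    · exfalso
      have := hi x0 hx0
      have : v (x0, s0) ≤ M := by simp only [hv, ← h]; simpa using this
      linarith
  -- spatial derivative conditions
  have hmaxx : ∀ y ∈ Set.Ioo (0:ℝ) 1, w y s0 ≤ w x0 s0 := by
    intro y hy
    have := hp0max (⟨Set.Ioo_subset_Icc_self hy, hs0⟩ : (y, s0) ∈ K)
    simp only [hv, Set.mem_setOf_eq] at this
    linarith
  have hwx0 : wx x0 s0 = 0 := by
    have hloc : IsLocalMax (fun y => w y s0) x0 := by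
      filter_upwards [Ioo_mem_nhds hx0i.1 hx0i.2] with y hy using hmaxx y hy
    exact hloc.hasDerivAt_eq_zero (hwx x0 hx0i s0 hs0i)
  have hwxx0 : wxx x0 s0 ≤ 0 :=
    second_deriv_nonpos_at_max hx0i (fun y hy => hwx y hy s0 hs0i)
      (hwxx x0 hx0i s0 hs0i) hmaxx
  -- time derivative condition
  have hwt0 : ε ≤ wt x0 s0 := by
    have hg : HasDerivAt (fun s => w x0 s - ε * s) (wt x0 s0 - ε) s0 := by
      exact ((hwt x0 hx0i s0 hs0i).sub ((hasDerivAt_id' s0).const_mul ε)).congr_deriv (by ring)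
    have hgmax : ∀ s ∈ Set.Ico (0:ℝ) s0, w x0 s - ε * s ≤ w x0 s0 - ε * s0 := by
      intro s hs
      have := hp0max (⟨hx0, ⟨hs.1, hs.2.le.trans hs0.2⟩⟩ : (x0, s) ∈ K)
      simpa [hv] using this
    have := deriv_nonneg_at_right_max hs0i.1 hg hgmax
    linarith
  have hpde := heq x0 hx0i s0 hs0i hwx0
  nlinarith

theorem burgers_boundary_maximum_estimate
    (μ ν : ℝ) (hμ : 0 < μ) (hν : 0 < ν)
    (d : ℝ → ℝ)
    (hd : ContinuousOn d (Set.Ici 0))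
    (hd0 : d 0 = 0)
    (w wt wx wxx : ℝ → ℝ → ℝ)
    (hwcont : ContinuousOn (fun p : ℝ × ℝ => w p.1 p.2) (Set.Icc 0 1 ×ˢ Set.Ici 0))
    (hwt : ∀ x ∈ Set.Ioo (0:ℝ) 1, ∀ t ∈ Set.Ioi (0:ℝ), HasDerivAt (fun τ => w x τ) (wt x t) t)
    (hwx : ∀ x ∈ Set.Ioo (0:ℝ) 1, ∀ t ∈ Set.Ioi (0:ℝ), HasDerivAt (fun y => w y t) (wx x t) x)
    (hwxx : ∀ x ∈ Set.Ioo (0:ℝ) 1, ∀ t ∈ Set.Ioi (0:ℝ), HasDerivAt (fun y => wx y t) (wxx x t) x)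
    (hwtc : ContinuousOn (fun p : ℝ × ℝ => wt p.1 p.2) (Set.Ioo 0 1 ×ˢ Set.Ioi 0))
    (hwxc : ContinuousOn (fun p : ℝ × ℝ => wx p.1 p.2) (Set.Ioo 0 1 ×ˢ Set.Ioi 0))
    (hwxxc : ContinuousOn (fun p : ℝ × ℝ => wxx p.1 p.2) (Set.Ioo 0 1 ×ˢ Set.Ioi 0))
    (hwpde : ∀ x ∈ Set.Ioo (0:ℝ) 1, ∀ t ∈ Set.Ioi (0:ℝ), wt x t - μ * wxx x t + ν * w x t * wx x t = 0)
    (hbc : ∀ t : ℝ, 0 ≤ t → w 0 t = 0 ∧ w 1 t = d t)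
    (hic : ∀ x ∈ Set.Icc (0:ℝ) 1, w x 0 = 0) :
    ∀ t : ℝ, 0 < t →
      (∀ x ∈ Set.Icc (0:ℝ) 1, ∀ s ∈ Set.Icc (0:ℝ) t, |w x s| ≤ sSup ((fun s => |d s|) '' Set.Icc 0 t)) ∧
      Real.sqrt (∫ x in (0:ℝ)..1, (w x t) ^ 2) ≤ sSup ((fun s => |d s|) '' Set.Icc 0 t) := by
  intro t ht
  set M : ℝ := sSup ((fun s => |d s|) '' Set.Icc 0 t) with hMdef
  have habs : ContinuousOn (fun s => |d s|) (Set.Icc 0 t) :=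
    (hd.mono (Set.Icc_subset_Ici_self)).abs
  have hcomp : IsCompact ((fun s => |d s|) '' Set.Icc 0 t) :=
    (isCompact_Icc).image_of_continuousOn habs
  have hbdd : BddAbove ((fun s => |d s|) '' Set.Icc 0 t) := hcomp.bddAbove
  have hdM : ∀ s ∈ Set.Icc (0:ℝ) t, |d s| ≤ M := fun s hs =>
    le_csSup hbdd (Set.mem_image_of_mem _ hs)
  have hM : 0 ≤ M := le_trans (abs_nonneg (d 0)) (hdM 0 ⟨le_refl 0, ht.le⟩)
  have hsub : Set.Icc (0:ℝ) 1 ×ˢ Set.Icc 0 t ⊆ Set.Icc (0:ℝ) 1 ×ˢ Set.Ici 0 :=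
    Set.prod_mono subset_rfl (Set.Icc_subset_Ici_self)
  have hioc : ∀ s : ℝ, s ∈ Set.Ioc (0:ℝ) t → s ∈ Set.Ioi (0:ℝ) := fun s hs => hs.1
  -- upper bound
  have hupper : ∀ x ∈ Set.Icc (0:ℝ) 1, ∀ s ∈ Set.Icc (0:ℝ) t, w x s ≤ M := by
    apply parabolic_max_principle_s14 μ hμ t ht M hM w wt wx wxx (hwcont.mono hsub)
      (fun x hx s hs => hwt x hx s (hioc s hs))
      (fun x hx s hs => hwx x hx s (hioc s hs))
      (fun x hx s hs => hwxx x hx s (hioc s hs))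
    · intro x hx s hs h0
      have := hwpde x hx s (hioc s hs)
      rw [h0] at this
      linarith [this]
    · intro s hs
      rw [(hbc s hs.1).1]; exact hM
    · intro s hs
      rw [(hbc s hs.1).2]
      exact le_trans (le_abs_self _) (hdM s hs)
    · intro x hx
      rw [hic x hx]; exact hM
  -- lower bound
  have hlower : ∀ x ∈ Set.Icc (0:ℝ) 1, ∀ s ∈ Set.Icc (0:ℝ) t, -(w x s) ≤ M := by
    apply parabolic_max_principle_s14 μ hμ t ht M hM (fun x s => -(w x s))
      (fun x s => -(wt x s)) (fun x s => -(wx x s)) (fun x s => -(wxx x s))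
      ((hwcont.mono hsub).neg)
      (fun x hx s hs => (hwt x hx s (hioc s hs)).neg)
      (fun x hx s hs => (hwx x hx s (hioc s hs)).neg)
      (fun x hx s hs => (hwxx x hx s (hioc s hs)).neg)
    · intro x hx s hs h0
      have h0' : wx x s = 0 := by linarith [h0]
      have := hwpde x hx s (hioc s hs)
      rw [h0'] at this
      ring_nf
      ring_nf at this
      linarith [this]
    · intro s hs
      rw [(hbc s hs.1).1]; simpa using hM
    · intro s hs
      rw [(hbc s hs.1).2]
      exact le_trans (neg_le_abs _) (hdM s hs)
    · intro x hx
      rw [hic x hx]; simpa using hM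
  have part1 : ∀ x ∈ Set.Icc (0:ℝ) 1, ∀ s ∈ Set.Icc (0:ℝ) t, |w x s| ≤ M := by
    intro x hx s hs
    exact abs_le.2 ⟨by linarith [hlower x hx s hs], hupper x hx s hs⟩
  refine ⟨part1, ?_⟩
  -- L² estimate
  have hwtcont : ContinuousOn (fun x => w x t) (Set.Icc 0 1) := by
    have : ContinuousOn (fun x : ℝ => ((x, t) : ℝ × ℝ)) (Set.Icc 0 1) :=
      (continuous_id.prodMk continuous_const).continuousOn
    exact hwcont.comp this (fun x hx => ⟨hx, Set.mem_Ici.2 ht.le⟩)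
  have hint : IntervalIntegrable (fun x => (w x t) ^ 2) volume 0 1 := by
    apply ContinuousOn.intervalIntegrable
    rw [Set.uIcc_of_le (zero_le_one)]
    exact hwtcont.pow 2
  have hle : (∫ x in (0:ℝ)..1, (w x t) ^ 2) ≤ ∫ x in (0:ℝ)..1, M ^ 2 := by
    apply intervalIntegral.integral_mono_on zero_le_one hint intervalIntegrable_const
    intro x hx
    calc (w x t) ^ 2 = |w x t| ^ 2 := (sq_abs _).symm
      _ ≤ M ^ 2 := pow_le_pow_left₀ (abs_nonneg _) (part1 x hx t ⟨ht.le, le_refl t⟩) 2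
  have hconst : (∫ x in (0:ℝ)..1, M ^ 2) = M ^ 2 := by simp
  calc Real.sqrt (∫ x in (0:ℝ)..1, (w x t) ^ 2)
      ≤ Real.sqrt (M ^ 2) := Real.sqrt_le_sqrt (le_trans hle (le_of_eq hconst))
    _ = M := by rw [Real.sqrt_sq hM]
end

section
/- (Theorem 15) Let μ > 0 and ν > 0 be constants, let d : [0,∞) → ℝ be continuous with d(0) = 0 and f : [0,1] × [0,∞) → ℝ be continuous, and let w : [0,1] × [0,∞) → ℝ be a classical solution of w_t − μ w_xx + ν w w_x = f(x,t) on (0,1) × (0,∞) with boundary conditions w(0,t) = 0, w(1,t) = d(t) for all t ≥ 0 and zero initial condition w(x,0) = 0. Then for every t > 0 and every p ∈ (2, ∞): max over (x,s) ∈ [0,1] × [0,t] of |w(x,s)| is at most max_{s∈[0,t]} |d(s)| + (1/μ) · 2^{(5p−8)/(2p−4)} · max_{(x,s)∈[0,1]×[0,t]} |f(x,s)|; consequently (∫₀¹ w(x,t)² dx)^{1/2} is bounded by the same quantity. -/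
open Real MeasureTheory intervalIntegral Set
open Filter Topology

/-- One-sided Fermat: derivative at a max attained from the left is nonneg. -/
lemma burgers_aux_deriv_nonneg_of_max_left {g : ℝ → ℝ} {g' t s₀ : ℝ}
    (h0 : 0 < s₀) (hst : s₀ ≤ t)
    (hmax : ∀ s ∈ Set.Icc (0:ℝ) t, g s ≤ g s₀)
    (hd : HasDerivAt g g' s₀) : 0 ≤ g' := by
  have H : Tendsto (slope g s₀) (𝓝[<] s₀) (𝓝 g') :=
    (hasDerivAt_iff_tendsto_slope.1 hd).mono_left
      (nhdsWithin_mono _ fun y hy => ne_of_lt hy)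
  refine ge_of_tendsto H ?_
  filter_upwards [Ioo_mem_nhdsLT_of_mem (Set.mem_Ioc.2 ⟨h0, le_refl s₀⟩)] with s hs
  have h1 : g s ≤ g s₀ := hmax s ⟨hs.1.le, hs.2.le.trans hst⟩
  rw [slope_def_field]
  exact div_nonneg_of_nonpos (by linarith) (by linarith [hs.2])

/-- Second derivative test at an interior max. -/
lemma burgers_aux_second_deriv_nonpos {g g' g'' : ℝ → ℝ} {x₀ : ℝ}
    (hx₀ : x₀ ∈ Set.Ioo (0:ℝ) 1)
    (hd1 : ∀ y ∈ Set.Ioo (0:ℝ) 1, HasDerivAt g (g' y) y)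
    (hd2 : ∀ y ∈ Set.Ioo (0:ℝ) 1, HasDerivAt g' (g'' y) y)
    (hc : ContinuousAt g'' x₀)
    (hmax : ∀ y ∈ Set.Icc (0:ℝ) 1, g y ≤ g x₀) : g'' x₀ ≤ 0 := by
  by_contra hpos
  push_neg at hpos
  have hloc : IsLocalMax g x₀ := by
    have h2 : ∀ᶠ y in 𝓝 x₀, y ∈ Set.Ioo (0:ℝ) 1 :=
      eventually_of_mem (isOpen_Ioo.mem_nhds hx₀) fun y hy => hy
    filter_upwards [h2] with y hy
    exact hmax y ⟨hy.1.le, hy.2.le⟩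
  have h0 : g' x₀ = 0 := hloc.hasDerivAt_eq_zero (hd1 x₀ hx₀)
  have hev : ∀ᶠ y in 𝓝 x₀, 0 < g'' y ∧ y ∈ Set.Ioo (0:ℝ) 1 :=
    (hc.eventually (eventually_gt_nhds hpos)).and
      (eventually_of_mem (isOpen_Ioo.mem_nhds hx₀) fun y hy => hy)
  obtain ⟨δ, hδ0, hδ⟩ := Metric.eventually_nhds_iff.mp hev
  set b := x₀ + δ / 2 with hb
  have hmemb : ∀ y ∈ Set.Icc x₀ b, 0 < g'' y ∧ y ∈ Set.Ioo (0:ℝ) 1 := by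
    intro y hy
    obtain ⟨hy1, hy2⟩ := hy
    apply hδ
    rw [Real.dist_eq, abs_lt]
    rw [hb] at hy2
    constructor <;> linarith
  have hg'mono : StrictMonoOn g' (Set.Icc x₀ b) := by
    apply strictMonoOn_of_deriv_pos (convex_Icc _ _)
    · intro y hy
      exact ((hd2 y (hmemb y hy).2).continuousAt).continuousWithinAt
    · intro y hy
      rw [interior_Icc] at hy
      have hy' := hmemb y ⟨hy.1.le, hy.2.le⟩
      rw [(hd2 y hy'.2).deriv]
      exact hy'.1
  have hg'pos : ∀ y ∈ Set.Ioo x₀ b, 0 < g' y := by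
    intro y hy
    have := hg'mono (Set.left_mem_Icc.2 (by simp only [hb]; linarith)) ⟨hy.1.le, hy.2.le⟩ hy.1
    linarith [h0 ▸ this]
  have hgmono : StrictMonoOn g (Set.Icc x₀ b) := by
    apply strictMonoOn_of_deriv_pos (convex_Icc _ _)
    · intro y hy
      exact ((hd1 y (hmemb y hy).2).continuousAt).continuousWithinAt
    · intro y hy
      rw [interior_Icc] at hy
      rw [(hd1 y (hmemb y ⟨hy.1.le, hy.2.le⟩).2).deriv]
      exact hg'pos y hy
  have hblt : g x₀ < g b :=
    hgmono (Set.left_mem_Icc.2 (by simp only [hb]; linarith)) (Set.right_mem_Icc.2 (by simp only [hb]; linarith))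
      (by simp only [hb]; linarith)
  have hbmem : b ∈ Set.Icc (0:ℝ) 1 := by
    have := (hmemb b (Set.right_mem_Icc.2 (by simp only [hb]; linarith))).2
    exact ⟨this.1.le, this.2.le⟩
  exact absurd (hmax b hbmem) (not_le.2 hblt)

/-- Core maximum principle with a concave barrier. -/
lemma burgers_aux_max_principle
    (μ b c D M t : ℝ) (hμ : 0 < μ) (hc : 0 < c) (hD : 0 ≤ D) (ht : 0 < t)
    (u ut ux uxx F : ℝ → ℝ → ℝ)
    (hucont : ContinuousOn (fun p : ℝ × ℝ => u p.1 p.2) (Set.Icc 0 1 ×ˢ Set.Icc 0 t))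
    (hut : ∀ x ∈ Set.Ioo (0:ℝ) 1, ∀ s ∈ Set.Ioi (0:ℝ), HasDerivAt (fun τ => u x τ) (ut x s) s)
    (hux : ∀ x ∈ Set.Ioo (0:ℝ) 1, ∀ s ∈ Set.Ioi (0:ℝ), HasDerivAt (fun y => u y s) (ux x s) x)
    (huxx : ∀ x ∈ Set.Ioo (0:ℝ) 1, ∀ s ∈ Set.Ioi (0:ℝ), HasDerivAt (fun y => ux y s) (uxx x s) x)
    (huxxc : ContinuousOn (fun p : ℝ × ℝ => uxx p.1 p.2) (Set.Ioo 0 1 ×ˢ Set.Ioi 0))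
    (hpde : ∀ x ∈ Set.Ioo (0:ℝ) 1, ∀ s ∈ Set.Ioi (0:ℝ),
      ut x s - μ * uxx x s + b * u x s * ux x s = F x s)
    (hM : ∀ x ∈ Set.Icc (0:ℝ) 1, ∀ s ∈ Set.Icc (0:ℝ) t, F x s ≤ M)
    (hcM : M < μ * c)
    (φ φ' : ℝ → ℝ)
    (hφ : ∀ y : ℝ, HasDerivAt φ (φ' y) y)
    (hφ' : ∀ y : ℝ, HasDerivAt φ' (-1) y)
    (hφ0 : ∀ y ∈ Set.Icc (0:ℝ) 1, 0 ≤ φ y)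
    (hbφ : ∀ y ∈ Set.Ioo (0:ℝ) 1, 0 ≤ b * φ' y)
    (hbdry0 : ∀ s ∈ Set.Icc (0:ℝ) t, u 0 s - c * φ 0 ≤ D)
    (hbdry1 : ∀ s ∈ Set.Icc (0:ℝ) t, u 1 s - c * φ 1 ≤ D)
    (hinit : ∀ x ∈ Set.Icc (0:ℝ) 1, u x 0 - c * φ x ≤ D) :
    ∀ x ∈ Set.Icc (0:ℝ) 1, ∀ s ∈ Set.Icc (0:ℝ) t, u x s ≤ D + c * φ x := by
  have hφcont : Continuous φ := by
    rw [continuous_iff_continuousAt]; exact fun y => (hφ y).continuousAt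
  have hKc : IsCompact (Set.Icc (0:ℝ) 1 ×ˢ Set.Icc (0:ℝ) t) :=
    isCompact_Icc.prod isCompact_Icc
  have hKne : (Set.Icc (0:ℝ) 1 ×ˢ Set.Icc (0:ℝ) t).Nonempty :=
    ⟨(0, 0), ⟨⟨le_refl _, zero_le_one⟩, ⟨le_refl _, ht.le⟩⟩⟩
  have hvcont : ContinuousOn (fun q : ℝ × ℝ => u q.1 q.2 - c * φ q.1) (Set.Icc 0 1 ×ˢ Set.Icc 0 t) :=
    hucont.sub ((continuous_const.mul (hφcont.comp continuous_fst)).continuousOn)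
  obtain ⟨q, hqK, hqmax⟩ := hKc.exists_isMaxOn hKne hvcont
  have hqmax' : ∀ z ∈ Set.Icc (0:ℝ) 1 ×ˢ Set.Icc (0:ℝ) t,
      u z.1 z.2 - c * φ z.1 ≤ u q.1 q.2 - c * φ q.1 := fun z hz => hqmax hz
  obtain ⟨hq1, hq2⟩ := hqK
  suffices hvD : u q.1 q.2 - c * φ q.1 ≤ D by
    intro x hx s hs
    have := hqmax' (x, s) ⟨hx, hs⟩
    simp only at this
    linarith
  by_contra hvD
  push_neg at hvD
  -- boundary cases
  rcases eq_or_lt_of_le hq2.1 with hs0 | hs0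
  · exact absurd (hinit q.1 hq1) (by rw [← hs0] at hvD; simp only [not_le]; linarith)
  rcases eq_or_lt_of_le hq1.1 with hx0 | hx0
  · exact absurd (hbdry0 q.2 hq2) (by rw [← hx0] at hvD; simp only [not_le]; linarith)
  rcases eq_or_lt_of_le hq1.2 with hx1 | hx1
  · exact absurd (hbdry1 q.2 hq2) (by rw [hx1] at hvD; simp only [not_le]; linarith)
  have hx₀ : q.1 ∈ Set.Ioo (0:ℝ) 1 := ⟨hx0, hx1⟩
  have hs₀ : q.2 ∈ Set.Ioi (0:ℝ) := hs0
  -- time derivative sign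
  have htime : 0 ≤ ut q.1 q.2 := by
    apply burgers_aux_deriv_nonneg_of_max_left hs0 hq2.2
      (g := fun s => u q.1 s - c * φ q.1)
    · intro s hs
      exact hqmax' (q.1, s) ⟨hq1, hs⟩
    · exact (hut q.1 hx₀ q.2 hs₀).sub_const _
  -- space: first derivative zero
  have hspace_max : ∀ y ∈ Set.Icc (0:ℝ) 1, u y q.2 - c * φ y ≤ u q.1 q.2 - c * φ q.1 := by
    intro y hy
    exact hqmax' (y, q.2) ⟨hy, hq2⟩
  have hloc : IsLocalMax (fun y => u y q.2 - c * φ y) q.1 := by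
    filter_upwards [eventually_of_mem (isOpen_Ioo.mem_nhds hx₀) fun y hy => hy] with y hy
    exact hspace_max y ⟨hy.1.le, hy.2.le⟩
  have hux0 : ux q.1 q.2 - c * φ' q.1 = 0 :=
    hloc.hasDerivAt_eq_zero ((hux q.1 hx₀ q.2 hs₀).sub ((hφ q.1).const_mul c))
  -- space: second derivative sign
  have hwxx0 : uxx q.1 q.2 + c ≤ 0 := by
    apply burgers_aux_second_deriv_nonpos (g := fun y => u y q.2 - c * φ y)
      (g' := fun y => ux y q.2 - c * φ' y) (g'' := fun y => uxx y q.2 + c) hx₀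
    · intro y hy
      exact (hux y hy q.2 hs₀).sub ((hφ y).const_mul c)
    · intro y hy
      have h1 : HasDerivAt (fun z => ux z q.2) (uxx y q.2) y := huxx y hy q.2 hs₀
      have h2 : HasDerivAt (fun z => c * φ' z) (c * (-1)) y := (hφ' y).const_mul c
      have := h1.sub h2
      refine this.congr_deriv ?_
      ring
    · have hcAt : ContinuousAt (fun p : ℝ × ℝ => uxx p.1 p.2) (q.1, q.2) :=
        huxxc.continuousAt ((isOpen_Ioo.prod isOpen_Ioi).mem_nhds ⟨hx₀, hs₀⟩)
      have hg : ContinuousAt (fun y : ℝ => (y, q.2)) q.1 :=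
        (continuous_id.prodMk continuous_const).continuousAt
      exact ContinuousAt.add (ContinuousAt.comp (f := fun y : ℝ => (y, q.2)) hcAt hg) continuousAt_const
    · exact hspace_max
  -- positivity of u at the max point
  have hupos : 0 < u q.1 q.2 := by
    have hφq : 0 ≤ φ q.1 := hφ0 q.1 ⟨hx₀.1.le, hx₀.2.le⟩
    nlinarith
  -- nonlinear term sign
  have hnl : 0 ≤ b * u q.1 q.2 * ux q.1 q.2 := by
    have h1 : ux q.1 q.2 = c * φ' q.1 := by linarith
    have h2 : 0 ≤ b * φ' q.1 := hbφ q.1 hx₀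
    have : b * u q.1 q.2 * ux q.1 q.2 = (b * φ' q.1) * c * u q.1 q.2 := by
      rw [h1]; ring
    rw [this]
    positivity
  -- contradiction with the PDE
  have hF := hpde q.1 hx₀ q.2 hs₀
  have hFM := hM q.1 ⟨hx₀.1.le, hx₀.2.le⟩ q.2 hq2
  have hkey : μ * (uxx q.1 q.2 + c) ≤ 0 := mul_nonpos_of_nonneg_of_nonpos hμ.le hwxx0
  nlinarith

theorem burgers_forced_boundary_maximum_estimate
    (μ ν : ℝ) (hμ : 0 < μ) (hν : 0 < ν)
    (d : ℝ → ℝ)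
    (hd : ContinuousOn d (Set.Ici 0))
    (hd0 : d 0 = 0)
    (f : ℝ → ℝ → ℝ)
    (hf : ContinuousOn (fun p : ℝ × ℝ => f p.1 p.2) (Set.Icc 0 1 ×ˢ Set.Ici 0))
    (w wt wx wxx : ℝ → ℝ → ℝ)
    (hwcont : ContinuousOn (fun p : ℝ × ℝ => w p.1 p.2) (Set.Icc 0 1 ×ˢ Set.Ici 0))
    (hwt : ∀ x ∈ Set.Ioo (0:ℝ) 1, ∀ t ∈ Set.Ioi (0:ℝ), HasDerivAt (fun τ => w x τ) (wt x t) t)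
    (hwx : ∀ x ∈ Set.Ioo (0:ℝ) 1, ∀ t ∈ Set.Ioi (0:ℝ), HasDerivAt (fun y => w y t) (wx x t) x)
    (hwxx : ∀ x ∈ Set.Ioo (0:ℝ) 1, ∀ t ∈ Set.Ioi (0:ℝ), HasDerivAt (fun y => wx y t) (wxx x t) x)
    (hwtc : ContinuousOn (fun p : ℝ × ℝ => wt p.1 p.2) (Set.Ioo 0 1 ×ˢ Set.Ioi 0))
    (hwxc : ContinuousOn (fun p : ℝ × ℝ => wx p.1 p.2) (Set.Ioo 0 1 ×ˢ Set.Ioi 0))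
    (hwxxc : ContinuousOn (fun p : ℝ × ℝ => wxx p.1 p.2) (Set.Ioo 0 1 ×ˢ Set.Ioi 0))
    (hwpde : ∀ x ∈ Set.Ioo (0:ℝ) 1, ∀ t ∈ Set.Ioi (0:ℝ), wt x t - μ * wxx x t + ν * w x t * wx x t = f x t)
    (hbc : ∀ t : ℝ, 0 ≤ t → w 0 t = 0 ∧ w 1 t = d t)
    (hic : ∀ x ∈ Set.Icc (0:ℝ) 1, w x 0 = 0) :
    ∀ t : ℝ, 0 < t → ∀ p : ℝ, 2 < p →
      (∀ x ∈ Set.Icc (0:ℝ) 1, ∀ s ∈ Set.Icc (0:ℝ) t,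
        |w x s| ≤ sSup ((fun s => |d s|) '' Set.Icc 0 t)
          + (1 / μ) * (2:ℝ) ^ ((5 * p - 8) / (2 * p - 4)) * sSup ((fun p : ℝ × ℝ => |f p.1 p.2|) '' (Set.Icc (0:ℝ) 1 ×ˢ Set.Icc (0:ℝ) t))) ∧
      Real.sqrt (∫ x in (0:ℝ)..1, (w x t) ^ 2) ≤ sSup ((fun s => |d s|) '' Set.Icc 0 t)
          + (1 / μ) * (2:ℝ) ^ ((5 * p - 8) / (2 * p - 4)) * sSup ((fun p : ℝ × ℝ => |f p.1 p.2|) '' (Set.Icc (0:ℝ) 1 ×ˢ Set.Icc (0:ℝ) t)) := by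
  intro t ht p hp
  set D := sSup ((fun s => |d s|) '' Set.Icc 0 t) with hDdef
  set M := sSup ((fun q : ℝ × ℝ => |f q.1 q.2|) '' (Set.Icc (0:ℝ) 1 ×ˢ Set.Icc (0:ℝ) t)) with hMdef
  have hIccIci : Set.Icc (0:ℝ) t ⊆ Set.Ici 0 := fun s hs => hs.1
  have hDb : ∀ s ∈ Set.Icc (0:ℝ) t, |d s| ≤ D := fun s hs =>
    le_csSup (isCompact_Icc.image_of_continuousOn ((hd.mono hIccIci).abs)).bddAbove
      (Set.mem_image_of_mem _ hs)
  have hD0 : 0 ≤ D := by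
    have := hDb 0 ⟨le_refl 0, ht.le⟩
    rw [hd0] at this; simpa using this
  have hKsub : (Set.Icc (0:ℝ) 1 ×ˢ Set.Icc (0:ℝ) t) ⊆ (Set.Icc (0:ℝ) 1 ×ˢ Set.Ici (0:ℝ)) :=
    Set.prod_mono_right hIccIci
  have hMb : ∀ x ∈ Set.Icc (0:ℝ) 1, ∀ s ∈ Set.Icc (0:ℝ) t, |f x s| ≤ M := fun x hx s hs =>
    le_csSup ((isCompact_Icc.prod isCompact_Icc).image_of_continuousOn
      ((hf.mono hKsub).abs)).bddAbove (Set.mem_image_of_mem _ (Set.mk_mem_prod hx hs))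
  have hM0 : 0 ≤ M :=
    le_trans (abs_nonneg _) (hMb 0 ⟨le_refl 0, zero_le_one⟩ 0 ⟨le_refl 0, ht.le⟩)
  -- the ε-approximate maximum estimate
  have hstep : ∀ ε : ℝ, 0 < ε → ∀ x ∈ Set.Icc (0:ℝ) 1, ∀ s ∈ Set.Icc (0:ℝ) t,
      |w x s| ≤ D + (M + ε) / μ / 2 := by
    intro ε hε x hx s hs
    have hc0 : 0 < (M + ε) / μ := div_pos (by linarith) hμ
    set c := (M + ε) / μ with hcdef
    have hμc : μ * c = M + ε := by rw [hcdef]; field_simp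
    have hcM : M < μ * c := by rw [hμc]; linarith
    -- upper estimate
    have hupper := burgers_aux_max_principle μ ν c D M t hμ hc0 hD0 ht w wt wx wxx f
      (hwcont.mono hKsub) hwt hwx hwxx hwxxc hwpde
      (fun x hx s hs => (abs_le.1 (hMb x hx s hs)).2) hcM
      (fun y => y - y ^ 2 / 2) (fun y => 1 - y)
      (fun y => by
        have h := (hasDerivAt_id y).sub ((hasDerivAt_pow 2 y).div_const 2)
        refine h.congr_deriv ?_
        norm_num)
      (fun y => by exact ((hasDerivAt_const y (1:ℝ)).sub (hasDerivAt_id y)).congr_deriv (by norm_num))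
      (fun y hy => by beta_reduce; nlinarith [hy.1, hy.2])
      (fun y hy => by beta_reduce; exact mul_nonneg hν.le (by linarith [hy.2]))
      (fun s hs => by
        have h := (hbc s hs.1).1
        beta_reduce
        rw [h]; norm_num
        try positivity
        try linarith)
      (fun s hs => by
        have h := (hbc s hs.1).2
        beta_reduce
        rw [h]
        have := hDb s hs
        have h1 : d s ≤ |d s| := le_abs_self _
        norm_num
        linarith)
      (fun x hx => by
        have h := hic x hx
        beta_reduce
        rw [h]
        have hφ : 0 ≤ x - x ^ 2 / 2 := by nlinarith [hx.1, hx.2]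
        nlinarith [mul_nonneg hc0.le hφ])
    have h1 := hupper x hx s hs
    -- lower estimate
    have hlower := burgers_aux_max_principle μ (-ν) c D M t hμ hc0 hD0 ht
      (fun x s => -w x s) (fun x s => -wt x s) (fun x s => -wx x s) (fun x s => -wxx x s)
      (fun x s => -f x s)
      ((hwcont.mono hKsub).neg)
      (fun x hx s hs => (hwt x hx s hs).neg)
      (fun x hx s hs => (hwx x hx s hs).neg)
      (fun x hx s hs => (hwxx x hx s hs).neg)
      (hwxxc.neg)
      (fun x hx s hs => by
        have h := hwpde x hx s hs
        linear_combination (-1 : ℝ) * h)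
      (fun x hx s hs => by
        have h := (abs_le.1 (hMb x hx s hs)).1
        beta_reduce
        linarith)
      hcM
      (fun y => 1 / 2 - y ^ 2 / 2) (fun y => -y)
      (fun y => by
        have h := (hasDerivAt_const y ((1:ℝ)/2)).sub ((hasDerivAt_pow 2 y).div_const 2)
        refine h.congr_deriv ?_
        norm_num)
      (fun y => by exact ((hasDerivAt_id y).neg).congr_deriv (by norm_num))
      (fun y hy => by beta_reduce; nlinarith [hy.1, hy.2])
      (fun y hy => by beta_reduce; nlinarith [hy.1, hν])
      (fun s hs => by
        have h := (hbc s hs.1).1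
        beta_reduce
        rw [h]
        norm_num
        try positivity
        try linarith)
      (fun s hs => by
        have h := (hbc s hs.1).2
        beta_reduce
        rw [h]
        have := hDb s hs
        have h1 : -d s ≤ |d s| := neg_le_abs _
        norm_num
        linarith)
      (fun x hx => by
        have h := hic x hx
        beta_reduce
        rw [h]
        have hφ : 0 ≤ 1 / 2 - x ^ 2 / 2 := by nlinarith [hx.1, hx.2]
        nlinarith [mul_nonneg hc0.le hφ])
    have h2 := hlower x hx s hs
    rw [abs_le]
    have hx1 := hx.1
    have hx2 := hx.2
    constructor
    · nlinarith [mul_nonneg hc0.le (sq_nonneg x), h2]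
    · nlinarith [mul_nonneg hc0.le (sq_nonneg (1 - x)), h1]
  -- pass to the limit ε → 0
  have hlimit : ∀ x ∈ Set.Icc (0:ℝ) 1, ∀ s ∈ Set.Icc (0:ℝ) t,
      |w x s| ≤ D + M / μ / 2 := by
    intro x hx s hs
    apply le_of_forall_pos_le_add
    intro ε hε
    have h := hstep (2 * μ * ε) (by positivity) x hx s hs
    have heq : D + (M + 2 * μ * ε) / μ / 2 = D + M / μ / 2 + ε := by
      field_simp
      ring
    linarith [heq ▸ h]
  -- compare constants
  set A := (2:ℝ) ^ ((5 * p - 8) / (2 * p - 4)) with hAdef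
  have hA1 : (1:ℝ) ≤ A := by
    have hθ : 0 ≤ (5 * p - 8) / (2 * p - 4) := div_nonneg (by linarith) (by linarith)
    have h := Real.rpow_le_rpow_of_exponent_le (one_le_two) hθ
    rwa [Real.rpow_zero] at h
  have hA0 : 0 ≤ A := by linarith
  have hconst : D + M / μ / 2 ≤ D + 1 / μ * A * M := by
    have hq : M / μ / 2 ≤ 1 / μ * A * M := by
      rw [div_div, div_le_iff₀ (by positivity : (0:ℝ) < μ * 2)]
      have heq : 1 / μ * A * M * (μ * 2) = 2 * A * M := by
        field_simp
      rw [heq]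
      nlinarith [mul_nonneg hM0 (sub_nonneg.2 hA1)]
    linarith
  have part1 : ∀ x ∈ Set.Icc (0:ℝ) 1, ∀ s ∈ Set.Icc (0:ℝ) t,
      |w x s| ≤ D + 1 / μ * A * M := fun x hx s hs =>
    (hlimit x hx s hs).trans hconst
  refine ⟨part1, ?_⟩
  -- L² consequence
  have hB0 : 0 ≤ D + 1 / μ * A * M := by
    have : 0 ≤ 1 / μ * A * M := by positivity
    linarith
  have hwcont_t : ContinuousOn (fun x => w x t) (Set.Icc (0:ℝ) 1) := by
    apply hwcont.comp ((continuous_id.prodMk continuous_const).continuousOn)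
    intro x hx
    exact ⟨hx, ht.le⟩
  have hint1 : IntervalIntegrable (fun x => (w x t) ^ 2) volume 0 1 := by
    apply ContinuousOn.intervalIntegrable
    rw [Set.uIcc_of_le zero_le_one]
    exact hwcont_t.pow 2
  have hmono : (∫ x in (0:ℝ)..1, (w x t) ^ 2) ≤ ∫ _x in (0:ℝ)..1, (D + 1 / μ * A * M) ^ 2 := by
    apply intervalIntegral.integral_mono_on zero_le_one hint1 intervalIntegrable_const
    intro x hx
    have h := part1 x hx t ⟨ht.le, le_refl t⟩
    have habs := abs_le.1 h
    nlinarith [habs.1, habs.2]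
  have hconstint : (∫ _x in (0:ℝ)..1, (D + 1 / μ * A * M) ^ 2) = (D + 1 / μ * A * M) ^ 2 := by
    simp
  calc Real.sqrt (∫ x in (0:ℝ)..1, (w x t) ^ 2)
      ≤ Real.sqrt ((D + 1 / μ * A * M) ^ 2) := Real.sqrt_le_sqrt (by rw [← hconstint]; exact hmono)
    _ = D + 1 / μ * A * M := Real.sqrt_sq hB0
end
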